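/- arXiv:2005.02716 — 5 statements merged into one kernel-verified Lean document; each statement's English description precedes it below -/
import Mathlib

section
/- If G is a connected (P3 + P1)-free finite simple graph, then every vertex of G of degree at least Δ(G) − 1 lies on every longest path of G (i.e., every vertex of degree at least Δ(G) − 1 is a Gallai vertex). -/
/-!
Suppose a longest path `P` misses `v`. Rerouting `P` (prepending a vertex, inserting one between
two consecutive vertices, rotating it through a chord, or opening a spanning cycle) would give a
longer path, so no vertex off `P` sees an end of `P` or two consecutive vertices of `P`, and the
ends of `P` are not adjacent once some vertex off `P` has a neighbour on `P`. Combined with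
`(P₃ + P₁)`-freeness this shows: `v` has a neighbour on `P`; both ends of `P`, every vertex off
`P`, and the predecessor of every neighbour of `v` on `P` are adjacent to all neighbours of `v`
on `P`. Let `x` be the last neighbour of `v` on `P`, with neighbours `w` and `y` on `P`. Shifting
the neighbours of `v` on `P` before `x` back by one step and fixing the others injects
`(N(v) \ {x}) ∪ {w, y}` into `N(x) \ {v}`, so `deg x ≥ deg v + 2 > Δ(G)`.
-/

open SimpleGraph

/-- `p` is a longest path in the graph `G`. -/
def IsLongestPath {V : Type} (G : SimpleGraph V) {u v : V} (p : G.Walk u v) : Prop :=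
  p.IsPath ∧ ∀ (a b : V) (q : G.Walk a b), q.IsPath → q.length ≤ p.length

/-- The graph `P₃ + P₁`: the disjoint union of a path on three vertices and an
isolated vertex. -/
def P3plusP1 : SimpleGraph (Fin 4) := fromEdgeSet {s(0, 1), s(1, 2)}

theorem List.exists_split_last_of_exists {α : Type*} {p : α → Prop} :
    ∀ {l : List α}, (∃ a ∈ l, p a) → ∃ s a t, l = s ++ a :: t ∧ p a ∧ ∀ b ∈ t, ¬ p b
  | [], h => by simp at h
  | b :: l, h => by
    by_cases hl : ∃ a ∈ l, p a
    · obtain ⟨s, a, t, rfl, ha, ht⟩ := exists_split_last_of_exists hl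
      exact ⟨b :: s, a, t, rfl, ha, ht⟩
    · refine ⟨[], b, l, rfl, ?_, fun a ha hpa => hl ⟨a, ha, hpa⟩⟩
      obtain ⟨a, ha, hpa⟩ := h
      rcases List.mem_cons.mp ha with rfl | ha
      · exact hpa
      · exact absurd ⟨a, ha, hpa⟩ hl

namespace SimpleGraph

variable {V : Type*} {G : SimpleGraph V}

theorem adj_or_adj_or_adj_of_P3plusP1_free (hfree : IsEmpty (P3plusP1 ↪g G)) {a b c : V}
    (hab : G.Adj a b) (hbc : G.Adj b c) (hac : a ≠ c) (hac' : ¬ G.Adj a c) (d : V) :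
    G.Adj d a ∨ G.Adj d b ∨ G.Adj d c := by
  by_contra! ⟨hda, hdb, hdc⟩
  have hda' : d ≠ a := fun h => hdb (h ▸ hab)
  have hdb' : d ≠ b := fun h => hda (h ▸ hab.symm)
  have hdc' : d ≠ c := fun h => hdb (h ▸ hbc.symm)
  refine hfree.false ⟨⟨![a, b, c, d], fun i j hij => ?_⟩, fun {i j} => ?_⟩
  · fin_cases i <;> fin_cases j <;> simp_all [hab.ne, hbc.ne, eq_comm]
  · change G.Adj (![a, b, c, d] i) (![a, b, c, d] j) ↔ _
    fin_cases i <;> fin_cases j <;> simp [P3plusP1, G.adj_comm _ d, G.adj_comm c, hab.symm, *]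

theorem isChain_reverse_adj {l : List V} : l.reverse.IsChain G.Adj ↔ l.IsChain G.Adj :=
  List.isChain_reverse.trans (List.IsChain.iff fun _ _ => G.adj_comm _ _)

-- Paths are handled through their vertex lists, on which rerouting is list surgery.
variable (G) in
def IsPathList (l : List V) : Prop := l.IsChain G.Adj ∧ l.Nodup

variable (G) in
def IsLongestPathList (l : List V) : Prop :=
  G.IsPathList l ∧ ∀ m, G.IsPathList m → m.length ≤ l.length

theorem Connected.exists_adj_of_notMem_of_mem (hconn : G.Connected) {s : Set V} {v w : V}
    (hv : v ∉ s) (hw : w ∈ s) : ∃ u ∉ s, ∃ z ∈ s, G.Adj u z := by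
  obtain ⟨p⟩ := hconn.preconnected v w
  obtain ⟨d, -, hd₁, hd₂⟩ := p.exists_boundary_dart sᶜ hv (by simpa using hw)
  exact ⟨d.fst, hd₁, d.snd, not_not.mp hd₂, d.adj⟩

theorem IsPathList.adj_head_of_forall_not_adj (hfree : IsEmpty (P3plusP1 ↪g G)) {d a : V} :
    ∀ {l : List V}, G.IsPathList (a :: l) → (∀ w ∈ a :: l, ¬ G.Adj d w) → ∀ w ∈ l, G.Adj a w
  | [], _, _ => by simp
  | [b], hl, _ => by simpa using hl.1
  | b :: c :: l, hl, hd => by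
    obtain ⟨hab, hbc, hc⟩ := List.isChain_cons_cons.mp hl.1 |>.imp_right List.isChain_cons_cons.mp
    have hac : G.Adj a c := by
      by_contra hac
      have hnd := hl.2
      have := adj_or_adj_or_adj_of_P3plusP1_free hfree hab hbc (by simp_all) hac d
      simp_all
    have ih := IsPathList.adj_head_of_forall_not_adj (d := d) hfree (l := c :: l)
      ⟨hc.cons_cons hac, hl.2.sublist (by simp)⟩ (fun w hw => hd w (by simp at hw ⊢; tauto))
    simp_all

namespace IsLongestPathList

variable {l m l₁ l₂ : List V} {u v a b x y z : V}

theorem reverse (hl : G.IsLongestPathList l) : G.IsLongestPathList l.reverse :=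
  ⟨⟨isChain_reverse_adj.mpr hl.1.1, List.nodup_reverse.mpr hl.1.2⟩, by simpa using hl.2⟩

theorem of_perm (hl : G.IsLongestPathList l) (hm : m.Perm l) (hc : m.IsChain G.Adj) :
    G.IsLongestPathList m :=
  ⟨⟨hc, hm.nodup_iff.mpr hl.1.2⟩, by simpa [hm.length_eq] using hl.2⟩

theorem not_isChain_of_perm_cons (hl : G.IsLongestPathList l) (hu : u ∉ l)
    (hm : m.Perm (u :: l)) : ¬ m.IsChain G.Adj := fun hc => by
  have := hl.2 m ⟨hc, hm.nodup_iff.mpr (List.nodup_cons.mpr ⟨hu, hl.1.2⟩)⟩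
  simp [hm.length_eq] at this

theorem not_adj_head (hl : G.IsLongestPathList l) (hu : u ∉ l) : ∀ a ∈ l.head?, ¬ G.Adj u a :=
  fun _ ha hua => hl.not_isChain_of_perm_cons hu (.refl _) (List.isChain_cons.mpr
    ⟨fun _ hb => Option.mem_unique ha hb ▸ hua, hl.1.1⟩)

theorem not_adj_getLast (hl : G.IsLongestPathList l) (hu : u ∉ l) :
    ∀ b ∈ l.getLast?, ¬ G.Adj u b := by
  simpa using hl.reverse.not_adj_head (by simpa using hu)

theorem not_adj_consecutive (hl : G.IsLongestPathList (l₁ ++ x :: y :: l₂))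
    (hu : u ∉ l₁ ++ x :: y :: l₂) : ¬ (G.Adj u x ∧ G.Adj u y) := fun ⟨hux, huy⟩ =>
  hl.not_isChain_of_perm_cons hu (m := l₁ ++ x :: u :: y :: l₂)
    (by classical exact List.perm_iff_count.mpr fun _ => by simp [List.count_cons]; omega) <| by
    have := hl.1.1
    simp_all [G.adj_comm u x]

theorem not_adj_head_succ_of_adj (hl : G.IsLongestPathList (a :: l₁ ++ z :: y :: l₂))
    (hu : u ∉ a :: l₁ ++ z :: y :: l₂) (huz : G.Adj u z) : ¬ G.Adj a y := fun hay =>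
  hl.not_isChain_of_perm_cons hu (m := u :: z :: l₁.reverse ++ a :: y :: l₂)
    (by classical exact List.perm_iff_count.mpr fun _ => by simp [List.count_cons]; omega) <| by
    have hc := List.isChain_cons_append_cons_cons.mp hl.1.1
    have hrev := isChain_reverse_adj.mpr hc.1
    simp_all

theorem not_adj_head_getLast (hl : G.IsLongestPathList (a :: l₁ ++ [b]))
    (hu : u ∉ a :: l₁ ++ [b]) (hz : z ∈ a :: l₁ ++ [b]) (huz : G.Adj u z) : ¬ G.Adj a b := by
  intro hab
  rcases List.mem_cons.mp hz with rfl | hz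
  · exact hl.not_adj_head hu _ rfl huz
  rcases List.mem_append.mp hz with hz | hz
  · obtain ⟨s, t, rfl⟩ := List.append_of_mem hz
    refine hl.not_isChain_of_perm_cons hu (m := u :: z :: t ++ b :: a :: s)
      (by classical exact List.perm_iff_count.mpr fun _ => by simp [List.count_cons]; omega) ?_
    have hc : (a :: s ++ z :: (t ++ [b])).IsChain G.Adj := by simpa using hl.1.1
    obtain ⟨hs, ht⟩ := List.isChain_split.mp hc
    simp_all [hab.symm, hs.left_of_append]
  · rw [List.mem_singleton.mp hz] at huz
    exact hl.not_adj_getLast hu _ (by simp [List.getLast?_cons]) huz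

theorem adj_head_of_adj (hfree : IsEmpty (P3plusP1 ↪g G)) (hl : G.IsLongestPathList l)
    (hv : v ∉ l) (hz : z ∈ l) (hvz : G.Adj v z) : ∀ a ∈ l.head?, G.Adj a z := by
  intro a ha
  obtain ⟨l', rfl⟩ := List.head?_eq_some_iff.mp ha
  have hza : z ≠ a := by rintro rfl; exact hl.not_adj_head hv _ rfl hvz
  obtain ⟨l₁, l₂, rfl⟩ := List.append_of_mem ((List.mem_cons.mp hz).resolve_left hza)
  cases l₂ with
  | nil => exact absurd hvz (hl.not_adj_getLast hv z (by simp [List.getLast?_cons]))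
  | cons y l₂ =>
    have hvy : ¬ G.Adj v y := fun h => hl.not_adj_consecutive (l₁ := a :: l₁) hv ⟨hvz, h⟩
    have hay := hl.not_adj_head_succ_of_adj hv hvz
    have hva : ¬ G.Adj a v := fun h => hl.not_adj_head hv a rfl h.symm
    have hvy' : v ≠ y := by rintro rfl; simp at hv
    have hzy : G.Adj z y := (List.isChain_cons_append_cons_cons.mp hl.1.1).2.1
    simpa [hva, hay] using adj_or_adj_or_adj_of_P3plusP1_free hfree hvz hzy hvy' hvy a

theorem adj_getLast_of_adj (hfree : IsEmpty (P3plusP1 ↪g G)) (hl : G.IsLongestPathList l)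
    (hv : v ∉ l) (hz : z ∈ l) (hvz : G.Adj v z) : ∀ b ∈ l.getLast?, G.Adj b z := by
  simpa using hl.reverse.adj_head_of_adj hfree (by simpa using hv) (by simpa using hz) hvz

theorem adj_of_adj_of_notMem (hfree : IsEmpty (P3plusP1 ↪g G)) (hl : G.IsLongestPathList l)
    (hv : v ∉ l) (hu : u ∉ l) (hz : z ∈ l) (hvz : G.Adj v z) : G.Adj u z := by
  obtain ⟨a, l', rfl⟩ := List.exists_cons_of_ne_nil (List.ne_nil_of_mem hz)
  have haz := hl.adj_head_of_adj hfree hv hz hvz a rfl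
  obtain rfl | ⟨l₁, b, rfl⟩ := List.eq_nil_or_concat' l'
  · simp_all
  have hbz := hl.adj_getLast_of_adj hfree hv hz hvz b (by simp [List.getLast?_cons])
  have hab : a ≠ b := by have := hl.1.2; simp_all
  have hab' := hl.not_adj_head_getLast hv hz hvz
  have hua := hl.not_adj_head hu a rfl
  have hub := hl.not_adj_getLast hu b (by simp [List.getLast?_cons])
  simpa [hua, hub] using adj_or_adj_or_adj_of_P3plusP1_free hfree haz hbz.symm hab hab' u

theorem adj_of_isInfix_of_adj (hfree : IsEmpty (P3plusP1 ↪g G)) (hl : G.IsLongestPathList l)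
    (hv : v ∉ l) (hxz : [x, z] <:+: l) (hvz : G.Adj v z) (hy : y ∈ l) (hvy : G.Adj v y) :
    G.Adj x y := by
  obtain ⟨l₁, l₂, rfl⟩ := hxz
  simp only [List.append_assoc, List.cons_append, List.nil_append] at hl hv hy
  obtain rfl | ⟨l₂, b, rfl⟩ := List.eq_nil_or_concat' l₂
  · exact absurd hvz (hl.not_adj_getLast hv z (by simp))
  have hm : (x :: l₁.reverse ++ z :: b :: l₂.reverse).Perm (l₁ ++ x :: z :: (l₂ ++ [b])) := by
    classical exact List.perm_iff_count.mpr fun _ => by simp [List.count_cons]; omega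
  have hc := List.isChain_append_cons_cons.mp hl.1.1
  have hx := isChain_reverse_adj.mpr hc.1
  have hb : (b :: l₂.reverse ++ [z]).IsChain G.Adj := by
    simpa using isChain_reverse_adj.mpr hc.2.2
  have hbz := hl.adj_getLast_of_adj hfree hv (by simp) hvz b (by simp [List.getLast?_cons])
  have hhead := hl.adj_head_of_adj hfree hv (by simp) hvz
  refine (hl.of_perm hm ?_).adj_head_of_adj hfree (fun h => hv (hm.mem_iff.mp h))
    (hm.mem_iff.mpr hy) hvy x rfl
  have := hb.left_of_append
  cases l₁ <;> simp_all [G.adj_comm z b]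

theorem exists_adj_of_notMem (hfree : IsEmpty (P3plusP1 ↪g G)) (hconn : G.Connected)
    (hl : G.IsLongestPathList l) (hne : l ≠ []) (hv : v ∉ l) : ∃ z ∈ l, G.Adj v z := by
  by_contra! hvl
  obtain ⟨u, hu, z, hz, huz⟩ :=
    hconn.exists_adj_of_notMem_of_mem (s := {w | w ∈ l}) hv (List.head_mem hne)
  obtain ⟨a, l', rfl⟩ := List.exists_cons_of_ne_nil hne
  obtain rfl | ⟨l₁, b, rfl⟩ := List.eq_nil_or_concat' l'
  · obtain rfl : z = a := by simpa using hz
    exact hl.not_adj_head hu z rfl huz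
  · exact hl.not_adj_head_getLast hu hz huz (hl.1.adj_head_of_forall_not_adj hfree hvl b (by simp))

theorem adj_prev_of_adj [DecidableEq V] (hfree : IsEmpty (P3plusP1 ↪g G))
    (hl : G.IsLongestPathList (l₁ ++ l₂)) (hv : v ∉ l₁ ++ l₂) (hu : u ∈ l₁) (hvu : G.Adj v u)
    (hy : y ∈ l₁ ++ l₂) (hvy : G.Adj v y) :
    G.Adj (l₁.prev u hu) y := by
  have hne : l₁ ≠ [] := List.ne_nil_of_mem hu
  have hhead : u ≠ l₁.head hne := fun h =>
    hl.not_adj_head hv _ (by simp [List.head?_eq_some_head hne]) (h ▸ hvu)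
  exact hl.adj_of_isInfix_of_adj hfree hv
    ((List.prev_infix_of_mem_tail hu hhead).trans (List.prefix_append _ _).isInfix) hvu hy hvy

theorem degree_add_two_le [Fintype V] [DecidableRel G.Adj] {w : V}
    (hfree : IsEmpty (P3plusP1 ↪g G)) (hl : G.IsLongestPathList (l₁ ++ w :: x :: y :: l₂))
    (hv : v ∉ l₁ ++ w :: x :: y :: l₂) (hvx : G.Adj v x) (hvl₂ : ∀ r ∈ y :: l₂, ¬ G.Adj v r) :
    G.degree v + 2 ≤ G.degree x := by
  classical
  have hnd := List.nodup_append.mp hl.1.2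
  have hc := List.isChain_append_cons_cons.mp hl.1.1
  have hwx : G.Adj w x := hc.2.1
  have hxy : G.Adj x y := (List.isChain_cons_cons.mp hc.2.2).1
  have hvw : ¬ G.Adj v w := fun h => hl.not_adj_consecutive hv ⟨h, hvx⟩
  have hvy : ¬ G.Adj v y := hvl₂ y (by simp)
  have hwy : w ≠ y := by have := hnd.2.1; simp_all
  have hwl₁ : w ∉ l₁ := fun h => hnd.2.2 w h w (by simp) rfl
  have hyl₁ : y ∉ l₁ := fun h => hnd.2.2 y h y (by simp) rfl
  set S := insert w (insert y ((G.neighborFinset v).erase x))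
  have hS : S.card = G.degree v + 1 := by
    rw [Finset.card_insert_of_notMem (by simp [hwy, hvw]),
      Finset.card_insert_of_notMem (by simp [hvy]), Finset.card_erase_of_mem (by simpa using hvx),
      card_neighborFinset_eq_degree,
      Nat.sub_add_cancel (G.degree_pos_iff_exists_adj v |>.mpr ⟨x, hvx⟩)]
  -- sends each vertex of `l₁` to its predecessor on the path and fixes every other vertex
  set φ := l₁.reverse.formPerm
  have hmaps : ∀ u ∈ S, φ u ∈ (G.neighborFinset x).erase v := by
    intro u hu
    rw [Finset.mem_erase, mem_neighborFinset]
    simp only [S, Finset.mem_insert, Finset.mem_erase, mem_neighborFinset] at hu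
    by_cases hul₁ : u ∈ l₁
    · obtain ⟨-, hvu⟩ : u ≠ x ∧ G.Adj v u := by
        rcases hu with rfl | rfl | h
        exacts [absurd hul₁ hwl₁, absurd hul₁ hyl₁, h]
      have hφu : φ u = l₁.prev u hul₁ := by
        rw [List.formPerm_apply_mem_eq_next (List.nodup_reverse.mpr hnd.1) u
          (List.mem_reverse.mpr hul₁), List.next_reverse_eq_prev _ hnd.1]
      exact hφu ▸ ⟨fun h => hv (h ▸ List.mem_append_left _ (l₁.prev_mem u hul₁)),
        (hl.adj_prev_of_adj hfree hv hul₁ hvu (by simp) hvx).symm⟩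
    · rw [List.formPerm_apply_of_notMem (by simpa using hul₁)]
      rcases hu with rfl | rfl | ⟨hux, hvu⟩
      · exact ⟨fun h => hv (h ▸ by simp), hwx.symm⟩
      · exact ⟨fun h => hv (h ▸ by simp), hxy⟩
      · have huL : u ∉ l₁ ++ w :: x :: y :: l₂ := by
          simp only [List.mem_append, List.mem_cons, not_or]
          exact ⟨hul₁, fun h => hvw (h ▸ hvu), hux, fun h => hvy (h ▸ hvu),
            fun h => hvl₂ u (List.mem_cons_of_mem _ h) hvu⟩
        exact ⟨hvu.ne', (hl.adj_of_adj_of_notMem hfree hv huL (by simp) hvx).symm⟩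
  have hcard := Finset.card_le_card_of_injOn φ hmaps φ.injective.injOn
  rw [hS, Finset.card_erase_of_mem (by simpa using hvx.symm),
    card_neighborFinset_eq_degree] at hcard
  omega

end IsLongestPathList

end SimpleGraph

theorem IsLongestPath.isLongestPathList_support {V : Type} {G : SimpleGraph V} {a b : V}
    {p : G.Walk a b} (hp : IsLongestPath G p) : G.IsLongestPathList p.support := by
  refine ⟨⟨p.isChain_adj_support, hp.1.support_nodup⟩, fun m hm => ?_⟩
  rcases eq_or_ne m [] with rfl | hne
  · simp
  have := hp.2 _ _ (Walk.ofSupport m hne hm.1) (Walk.isPath_def _ |>.mpr (by simpa using hm.2))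
  simp only [Walk.length_ofSupport, Walk.length_support] at this ⊢
  omega

/-- In a connected `(P₃ + P₁)`-free graph, every vertex of degree at least `Δ(G) - 1`
lies on every longest path. -/
theorem gallai_of_P3P1_free {V : Type} [Fintype V] (G : SimpleGraph V) [DecidableRel G.Adj]
    (hconn : G.Connected) (hfree : IsEmpty (P3plusP1 ↪g G))
    (v : V) (hv : G.maxDegree - 1 ≤ G.degree v)
    {a b : V} (p : G.Walk a b) (hp : IsLongestPath G p) :
    v ∈ p.support := by
  by_contra hvp
  have hl := hp.isLongestPathList_support
  obtain ⟨z, hz, hvz⟩ := hl.exists_adj_of_notMem hfree hconn p.support_ne_nil hvp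
  obtain ⟨l₁, x, l₂, hsplit, hvx, hvl₂⟩ := List.exists_split_last_of_exists ⟨z, hz, hvz⟩
  rw [hsplit] at hl hvp
  have hl₁ : l₁ ≠ [] := by rintro rfl; exact hl.not_adj_head hvp x rfl hvx
  have hl₂ : l₂ ≠ [] := by rintro rfl; exact hl.not_adj_getLast hvp x (by simp) hvx
  obtain ⟨l₁, w, rfl⟩ := (List.eq_nil_or_concat' l₁).resolve_left hl₁
  obtain ⟨y, l₂, rfl⟩ := List.exists_cons_of_ne_nil hl₂
  rw [List.append_assoc, List.singleton_append] at hl hvp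
  have := hl.degree_add_two_le hfree hvp hvx hvl₂
  have := G.degree_le_maxDegree x
  omega
end

section
/- Let G be a 2-connected finite simple graph and let x and y be distinct vertices of G. If the independence number of G − {x, y} satisfies α(G − {x, y}) ≤ 2, then either every xy-fiber of G contains every vertex of G of maximum degree Δ(G), or G − {x, y} is the disjoint union of two complete graphs (i.e., G − {x, y} has exactly two connected components, each of which is a complete graph). -/
open SimpleGraph

/-- `G` is `k`-connected: it has at least `k` vertices and deleting any set of fewer
than `k` vertices leaves a connected graph. -/
def KConnected {V : Type} [Fintype V] (k : ℕ) (G : SimpleGraph V) : Prop :=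
  k ≤ Fintype.card V ∧
    ∀ S : Finset V, S.card < k → (G.induce ((↑S : Set V)ᶜ)).Connected

/-- `p` is an `xy`-fiber of `G`: a longest path among all paths with endpoints `x`
and `y`. -/
def IsXYFiber {V : Type} (G : SimpleGraph V) {x y : V} (p : G.Walk x y) : Prop :=
  p.IsPath ∧ ∀ (q : G.Walk x y), q.IsPath → q.length ≤ p.length

namespace SimpleGraph.Walk

variable {V : Type} {G : SimpleGraph V}

variable {V : Type} {G : SimpleGraph V}

/-- Take the first `i` darts of a walk. -/
def takeW {x y : V} : (p : G.Walk x y) → (i : ℕ) → G.Walk x (p.getVert i)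
  | .nil, _ => .nil
  | p, 0 => Walk.nil.copy rfl (p.getVert_zero).symm
  | .cons h q, (i+1) => .cons h (takeW q i)

/-- Drop the first `i` darts of a walk. -/
def dropW {x y : V} : (p : G.Walk x y) → (i : ℕ) → G.Walk (p.getVert i) y
  | .nil, _ => .nil
  | p, 0 => p.copy (p.getVert_zero).symm rfl
  | .cons h q, (i+1) => dropW q i

@[simp] lemma takeW_nil {x : V} (i : ℕ) : (Walk.nil : G.Walk x x).takeW i = Walk.nil := by
  cases i <;> rfl

@[simp] lemma dropW_nil {x : V} (i : ℕ) : (Walk.nil : G.Walk x x).dropW i = Walk.nil := by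
  cases i <;> rfl

@[simp] lemma takeW_zero {x y : V} (p : G.Walk x y) : p.takeW 0 = Walk.nil.copy rfl (p.getVert_zero).symm := by
  cases p <;> rfl

@[simp] lemma dropW_zero {x y : V} (p : G.Walk x y) : p.dropW 0 = p.copy (p.getVert_zero).symm rfl := by
  cases p <;> rfl

@[simp] lemma takeW_cons_succ {x x' y : V} (h : G.Adj x x') (q : G.Walk x' y) (i : ℕ) :
    (Walk.cons h q).takeW (i+1) = .cons h (q.takeW i) := rfl

@[simp] lemma dropW_cons_succ {x x' y : V} (h : G.Adj x x') (q : G.Walk x' y) (i : ℕ) :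
    (Walk.cons h q).dropW (i+1) = q.dropW i := rfl

lemma takeW_append_dropW {x y : V} (p : G.Walk x y) (i : ℕ) :
    (p.takeW i).append (p.dropW i) = p := by
  induction p generalizing i with
  | nil => simp
  | cons h q ih =>
    cases i with
    | zero => simp
    | succ i => simp [ih]

lemma getVert_dropW {x y : V} (p : G.Walk x y) (i k : ℕ) :
    (p.dropW i).getVert k = p.getVert (i + k) := by
  induction p generalizing i with
  | nil =>
    simp only [dropW_nil]
    rfl
  | cons h q ih =>
    cases i with
    | zero => simp
    | succ i =>
      have hh : i + 1 + k = (i + k) + 1 := by omega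
      show (q.dropW i).getVert k = (Walk.cons h q).getVert (i + 1 + k)
      rw [hh, Walk.getVert_cons_succ]
      exact ih i

lemma length_dropW {x y : V} (p : G.Walk x y) (i : ℕ) :
    (p.dropW i).length = p.length - i := by
  induction p generalizing i with
  | nil => simp
  | cons h q ih =>
    cases i with
    | zero => simp
    | succ i => simpa using ih i

lemma length_takeW {x y : V} (p : G.Walk x y) (i : ℕ) (hi : i ≤ p.length) :
    (p.takeW i).length = i := by
  have h := congrArg Walk.length (p.takeW_append_dropW i)
  rw [length_append, length_dropW] at h
  omega

lemma dropW_succ {x y : V} (p : G.Walk x y) (i : ℕ) (hi : i < p.length) :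
    p.dropW i = Walk.cons (p.adj_getVert_succ hi) (p.dropW (i+1)) := by
  induction p generalizing i with
  | nil => simp at hi
  | cons h q ih =>
    cases i with
    | zero =>
      simp only [dropW_zero, dropW_cons_succ]
      cases q <;> rfl
    | succ i =>
      simp only [dropW_cons_succ]
      exact ih i (by simpa using hi)

lemma support_split_at {x y : V} (p : G.Walk x y) (i : ℕ) :
    p.support = (p.takeW i).support ++ (p.dropW i).support.tail := by
  conv_lhs => rw [← p.takeW_append_dropW i]
  rw [support_append]

lemma support_dropW_eq_cons {x y : V} (p : G.Walk x y) (i : ℕ) (hi : i < p.length) :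
    (p.dropW i).support = p.getVert i :: (p.dropW (i+1)).support := by
  rw [dropW_succ p i hi, support_cons]

lemma support_split_at' {x y : V} (p : G.Walk x y) (i : ℕ) (hi : i < p.length) :
    p.support = (p.takeW i).support ++ (p.dropW (i+1)).support := by
  rw [support_split_at p i, support_dropW_eq_cons p i hi, List.tail_cons]




lemma getVert_mem_support' {x y : V} (p : G.Walk x y) (i : ℕ) : p.getVert i ∈ p.support := by
  rw [mem_support_iff_exists_getVert]
  rcases le_or_gt i p.length with h | h
  · exact ⟨i, rfl, h⟩
  · exact ⟨p.length, by rw [getVert_length, getVert_of_length_le p h.le], le_rfl⟩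

lemma IsPath.getVert_injOn' {x y : V} {p : G.Walk x y} (hp : p.IsPath) :
    ∀ i ≤ p.length, ∀ j ≤ p.length, p.getVert i = p.getVert j → i = j := by
  induction p with
  | nil => intro i hi j hj _; simp only [length_nil, Nat.le_zero] at hi hj; omega
  | cons h q ih =>
    intro i hi j hj hij
    rw [cons_isPath_iff] at hp
    obtain ⟨hq, hx⟩ := hp
    match i, j with
    | 0, 0 => rfl
    | 0, (j+1) =>
      exfalso
      rw [getVert_zero, getVert_cons_succ] at hij
      exact hx (hij ▸ q.getVert_mem_support' j)
    | (i+1), 0 =>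
      exfalso
      rw [getVert_zero, getVert_cons_succ] at hij
      exact hx (hij.symm ▸ q.getVert_mem_support' i)
    | (i+1), (j+1) =>
      rw [getVert_cons_succ, getVert_cons_succ] at hij
      have := ih hq i (by simpa using hi) j (by simpa using hj) hij
      omega






lemma disj_rev {α : Type} {Q M : List α} (h : Q.Disjoint M) : Q.Disjoint M.reverse :=
  fun _ ha hb => h ha (List.mem_reverse.mp hb)

lemma nodup_glue {α : Type} (A M D Q : List α) (h : (A ++ (M ++ D)).Nodup)
    (hQ : Q.Nodup) (hdis : Q.Disjoint (A ++ (M ++ D))) :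
    (A ++ (Q ++ (M.reverse ++ D))).Nodup := by
  obtain ⟨hA, hMD, hAMD⟩ := List.nodup_append'.mp h
  obtain ⟨hM, hD, hMDdis⟩ := List.nodup_append'.mp hMD
  rw [List.disjoint_append_right] at hAMD
  obtain ⟨hAM, hAD⟩ := hAMD
  rw [List.disjoint_append_right, List.disjoint_append_right] at hdis
  obtain ⟨hQA, hQM, hQD⟩ := hdis
  have hRD : M.reverse.Disjoint D := fun a ha hb => hMDdis (List.mem_reverse.mp ha) hb
  have hRDnodup : (M.reverse ++ D).Nodup :=
    List.nodup_append'.mpr ⟨List.nodup_reverse.mpr hM, hD, hRD⟩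
  have hQRD : Q.Disjoint (M.reverse ++ D) :=
    List.disjoint_append_right.mpr ⟨disj_rev hQM, hQD⟩
  have hInner : (Q ++ (M.reverse ++ D)).Nodup :=
    List.nodup_append'.mpr ⟨hQ, hRDnodup, hQRD⟩
  have hAdisj : A.Disjoint (Q ++ (M.reverse ++ D)) := by
    rw [List.disjoint_append_right, List.disjoint_append_right]
    exact ⟨hQA.symm, disj_rev hAM, hAD⟩
  exact List.nodup_append'.mpr ⟨hA, hInner, hAdisj⟩

lemma nodup_glue' {α : Type} (A M D Q : List α) (h : (A ++ (M ++ D)).Nodup)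
    (hQ : Q.Nodup) (hdis : Q.Disjoint (A ++ (M ++ D))) :
    (A ++ (M.reverse ++ (Q ++ D))).Nodup := by
  obtain ⟨hA, hMD, hAMD⟩ := List.nodup_append'.mp h
  obtain ⟨hM, hD, hMDdis⟩ := List.nodup_append'.mp hMD
  rw [List.disjoint_append_right] at hAMD
  obtain ⟨hAM, hAD⟩ := hAMD
  rw [List.disjoint_append_right, List.disjoint_append_right] at hdis
  obtain ⟨hQA, hQM, hQD⟩ := hdis
  have hQDnodup : (Q ++ D).Nodup := List.nodup_append'.mpr ⟨hQ, hD, hQD⟩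
  have hRdisj : M.reverse.Disjoint (Q ++ D) := by
    rw [List.disjoint_append_right]
    exact ⟨(disj_rev hQM).symm, fun a ha hb => hMDdis (List.mem_reverse.mp ha) hb⟩
  have hInner : (M.reverse ++ (Q ++ D)).Nodup :=
    List.nodup_append'.mpr ⟨List.nodup_reverse.mpr hM, hQDnodup, hRdisj⟩
  have hAdisj : A.Disjoint (M.reverse ++ (Q ++ D)) := by
    rw [List.disjoint_append_right, List.disjoint_append_right]
    exact ⟨disj_rev hAM, hQA.symm, hAD⟩
  exact List.nodup_append'.mpr ⟨hA, hInner, hAdisj⟩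



section Surgery

variable {x y : V} {p : G.Walk x y}

/-- Insertion of an off-path path between two consecutive path vertices yields a longer path. -/
lemma surgery1 (hp : p.IsPath) (hmax : ∀ q : G.Walk x y, q.IsPath → q.length ≤ p.length)
    {c c' : V} (q : G.Walk c c') (hq : q.IsPath)
    (hqdis : ∀ w ∈ q.support, w ∉ p.support) {i : ℕ} (hi : i < p.length)
    (h1 : G.Adj (p.getVert i) c) (h2 : G.Adj c' (p.getVert (i+1))) : False := by
  set A := p.takeW i with hA
  set D := p.dropW (i+1) with hD
  set newp : G.Walk x y := A.append (Walk.cons h1 (q.append (Walk.cons h2 D))) with hnew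
  have hsup : newp.support = A.support ++ (q.support ++ D.support) := by
    rw [hnew, support_append, support_cons, List.tail_cons, support_append,
      support_cons, List.tail_cons]
  have hps : p.support = A.support ++ ([] ++ D.support) := by
    rw [List.nil_append]
    exact p.support_split_at' i hi
  have hnodup : newp.support.Nodup := by
    rw [hsup]
    have := nodup_glue A.support [] D.support q.support
      (hps ▸ hp.support_nodup) hq.support_nodup (fun w hw => by
        rw [← hps]; exact hqdis w hw)
    simpa using this
  have hlen : newp.length = p.length + q.length + 1 := by
    have h₁ : A.length = i := p.length_takeW i hi.le
    have h₂ : D.length = p.length - (i+1) := p.length_dropW (i+1)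
    rw [hnew, length_append, length_cons, length_append, length_cons, h₁, h₂]
    omega
  have := hmax newp (IsPath.mk' hnodup)
  omega

/-- Rotation with successors: yields a longer path. -/
lemma surgery2 (hp : p.IsPath) (hmax : ∀ q : G.Walk x y, q.IsPath → q.length ≤ p.length)
    {c c' : V} (q : G.Walk c c') (hq : q.IsPath)
    (hqdis : ∀ w ∈ q.support, w ∉ p.support) {i j : ℕ} (hij : i < j) (hj : j < p.length)
    (h1 : G.Adj (p.getVert i) c) (h2 : G.Adj c' (p.getVert j))
    (h3 : G.Adj (p.getVert (i+1)) (p.getVert (j+1))) : False := by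
  set A := p.takeW i with hA
  set p' := p.dropW (i+1) with hp'
  have hMv : p'.getVert (j-i-1) = p.getVert j := by
    rw [hp', getVert_dropW]; congr 1; omega
  have hDv : p'.getVert (j-i) = p.getVert (j+1) := by
    rw [hp', getVert_dropW]; congr 1; omega
  set M : G.Walk (p.getVert (i+1)) (p.getVert j) := (p'.takeW (j-i-1)).copy rfl hMv with hM
  set D : G.Walk (p.getVert (j+1)) y := (p'.dropW (j-i)).copy hDv rfl with hD
  set newp : G.Walk x y :=
    A.append (Walk.cons h1 (q.append (Walk.cons h2 (M.reverse.append (Walk.cons h3 D))))) with hnew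
  have hsup : newp.support
      = A.support ++ (q.support ++ ((p'.takeW (j-i-1)).support.reverse ++ D.support)) := by
    rw [hnew, support_append, support_cons, List.tail_cons, support_append, support_cons,
      List.tail_cons, support_append, support_cons, List.tail_cons, support_reverse, hM,
      support_copy]
  have hsplit' : p'.support = (p'.takeW (j-i-1)).support ++ (p'.dropW (j-i)).support := by
    have h5 : (j-i-1) < p'.length := by
      rw [hp', length_dropW]; omega
    have := p'.support_split_at' (j-i-1) h5
    rw [show j-i-1+1 = j-i by omega] at this
    exact this
  have hps : p.support = A.support ++ ((p'.takeW (j-i-1)).support ++ D.support) := by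
    rw [hD, support_copy, ← hsplit', hA, hp']
    exact p.support_split_at' i (by omega)
  have hnodup : newp.support.Nodup := by
    rw [hsup]
    exact nodup_glue _ _ _ _ (hps ▸ hp.support_nodup) hq.support_nodup
      (fun w hw => by rw [← hps]; exact hqdis w hw)
  have hlen : newp.length = p.length + q.length + 1 := by
    have h₁ : A.length = i := p.length_takeW i (by omega)
    have h₂ : D.length = p.length - j - 1 := by
      rw [hD, length_copy, length_dropW, hp', length_dropW]; omega
    have h₃ : M.length = j - i - 1 := by
      rw [hM, length_copy]
      refine p'.length_takeW _ ?_
      rw [hp', length_dropW]; omega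
    rw [hnew, length_append, length_cons, length_append, length_cons, length_append,
      length_cons, length_reverse, h₁, h₂, h₃]
    omega
  have := hmax newp (IsPath.mk' hnodup)
  omega

/-- Mirror rotation with predecessors: yields a longer path. -/
lemma surgery2' (hp : p.IsPath) (hmax : ∀ q : G.Walk x y, q.IsPath → q.length ≤ p.length)
    {c c' : V} (q : G.Walk c c') (hq : q.IsPath)
    (hqdis : ∀ w ∈ q.support, w ∉ p.support) {i j : ℕ} (h1i : 1 ≤ i) (hij : i < j)
    (hj : j ≤ p.length)
    (h1 : G.Adj (p.getVert i) c) (h2 : G.Adj c' (p.getVert j))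
    (h3 : G.Adj (p.getVert (i-1)) (p.getVert (j-1))) : False := by
  set A := p.takeW (i-1) with hA
  set p' := p.dropW i with hp'
  have hMv : p'.getVert (j-1-i) = p.getVert (j-1) := by
    rw [hp', getVert_dropW]; congr 1; omega
  have hDv : p'.getVert (j-i) = p.getVert j := by
    rw [hp', getVert_dropW]; congr 1; omega
  have hAv : p.getVert i = p'.getVert 0 := by rw [hp', getVert_dropW]; congr 1
  set M : G.Walk (p.getVert i) (p.getVert (j-1)) := (p'.takeW (j-1-i)).copy rfl hMv with hM
  set D : G.Walk (p.getVert j) y := (p'.dropW (j-i)).copy hDv rfl with hD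
  set newp : G.Walk x y :=
    A.append (Walk.cons h3 (M.reverse.append (Walk.cons h1 (q.append (Walk.cons h2 D))))) with hnew
  have hsup : newp.support
      = A.support ++ ((p'.takeW (j-1-i)).support.reverse ++ (q.support ++ D.support)) := by
    rw [hnew, support_append, support_cons, List.tail_cons, support_append, support_reverse,
      hM, support_copy, support_cons, List.tail_cons, support_append, support_cons,
      List.tail_cons]
  have hsplit' : p'.support = (p'.takeW (j-1-i)).support ++ (p'.dropW (j-i)).support := by
    have h5 : (j-1-i) < p'.length := by
      rw [hp', length_dropW]; omega
    have := p'.support_split_at' (j-1-i) h5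
    rw [show j-1-i+1 = j-i by omega] at this
    exact this
  have hps : p.support = A.support ++ ((p'.takeW (j-1-i)).support ++ D.support) := by
    rw [hD, support_copy, ← hsplit', hA, hp']
    have := p.support_split_at' (i-1) (by omega)
    rw [show i-1+1 = i by omega] at this
    exact this
  have hnodup : newp.support.Nodup := by
    rw [hsup]
    exact nodup_glue' _ _ _ _ (hps ▸ hp.support_nodup) hq.support_nodup
      (fun w hw => by rw [← hps]; exact hqdis w hw)
  have hlen : newp.length = p.length + q.length + 1 := by
    have h₁ : A.length = i-1 := p.length_takeW (i-1) (by omega)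
    have h₂ : D.length = p.length - j := by
      rw [hD, length_copy, length_dropW, hp', length_dropW]; omega
    have h₃ : M.length = j - 1 - i := by
      rw [hM, length_copy]
      refine p'.length_takeW _ ?_
      rw [hp', length_dropW]; omega
    rw [hnew, length_append, length_cons, length_append, length_reverse, length_cons,
      length_append, length_cons, h₁, h₂, h₃]
    omega
  have := hmax newp (IsPath.mk' hnodup)
  omega

/-- Inserting a whole off-path path between `u_i` and `u_j`, skipping the middle:
bounds the inserted path. -/
lemma surgery3 (hp : p.IsPath) (hmax : ∀ q : G.Walk x y, q.IsPath → q.length ≤ p.length)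
    {c c' : V} (q : G.Walk c c') (hq : q.IsPath)
    (hqdis : ∀ w ∈ q.support, w ∉ p.support) {i j : ℕ} (hij : i + 2 ≤ j) (hj : j ≤ p.length)
    (h1 : G.Adj (p.getVert i) c) (h2 : G.Adj c' (p.getVert j)) :
    q.length + 2 ≤ j - i := by
  by_contra hcon
  set A := p.takeW i with hA
  set p' := p.dropW (i+1) with hp'
  have hDv : p'.getVert (j-i-1) = p.getVert j := by
    rw [hp', getVert_dropW]; congr 1; omega
  set D : G.Walk (p.getVert j) y := (p'.dropW (j-i-1)).copy hDv rfl with hD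
  set newp : G.Walk x y := A.append (Walk.cons h1 (q.append (Walk.cons h2 D))) with hnew
  have hsup : newp.support = A.support ++ (q.support ++ D.support) := by
    rw [hnew, support_append, support_cons, List.tail_cons, support_append,
      support_cons, List.tail_cons]
  have hsplit' : p'.support = (p'.takeW (j-i-2)).support ++ (p'.dropW (j-i-1)).support := by
    have h5 : (j-i-2) < p'.length := by
      rw [hp', length_dropW]; omega
    have := p'.support_split_at' (j-i-2) h5
    rw [show j-i-2+1 = j-i-1 by omega] at this
    exact this
  have hps : p.support = A.support ++ ((p'.takeW (j-i-2)).support ++ D.support) := by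
    rw [hD, support_copy, ← hsplit', hA, hp']
    exact p.support_split_at' i (by omega)
  have hpnodup : (A.support ++ ((p'.takeW (j-i-2)).support ++ D.support)).Nodup :=
    hps ▸ hp.support_nodup
  have hADnodup : (A.support ++ ([] ++ D.support)).Nodup := by
    rw [List.nil_append]
    refine List.Sublist.nodup ?_ hpnodup
    exact (List.sublist_append_right _ _).append_left A.support
  have hnodup : newp.support.Nodup := by
    rw [hsup]
    have := nodup_glue A.support [] D.support q.support hADnodup hq.support_nodup
      (fun w hw hw2 => by
        refine hqdis w hw ?_
        rw [hps]
        simp only [List.nil_append, List.mem_append] at hw2 ⊢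
        tauto)
    simpa using this
  have hlen : newp.length = i + 1 + q.length + 1 + (p.length - j) := by
    have h₁ : A.length = i := p.length_takeW i (by omega)
    have h₂ : D.length = p.length - j := by
      rw [hD, length_copy, length_dropW, hp', length_dropW]; omega
    rw [hnew, length_append, length_cons, length_append, length_cons, h₁, h₂]
    omega
  have := hmax newp (IsPath.mk' hnodup)
  omega

end Surgery

end SimpleGraph.Walk

open SimpleGraph

lemma clique_hamPath [DecidableEq V] (G : SimpleGraph V) (s : Finset V) :
    (∀ a ∈ s, ∀ b ∈ s, a ≠ b → G.Adj a b) → ∀ a b : V, a ∈ s → b ∈ s → a ≠ b →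
    ∃ q : G.Walk a b, q.IsPath ∧ q.support.toFinset = s ∧ q.support.length = s.card := by
  induction s using Finset.strongInduction with
  | _ s ih =>
    intro hcl a b ha hb hab
    by_cases h2 : s.card ≤ 2
    · have hseq : ({a, b} : Finset V) = s := by
        apply Finset.eq_of_subset_of_card_le
        · intro z hz
          simp only [Finset.mem_insert, Finset.mem_singleton] at hz
          rcases hz with rfl | rfl <;> assumption
        · rwa [Finset.card_pair hab]
      refine ⟨Walk.cons (hcl a ha b hb hab) Walk.nil, ?_, ?_, ?_⟩
      · exact Walk.IsPath.mk' (by simp [hab])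
      · simp only [Walk.support_cons, Walk.support_nil]
        rw [← hseq]; simp
      · simp [← hseq, Finset.card_pair hab]
    · push_neg at h2
      have hcb : 1 ≤ ((s.erase a).erase b).card := by
        have h1 := Finset.card_erase_of_mem ha
        have hbmem : b ∈ s.erase a := Finset.mem_erase.mpr ⟨(Ne.symm hab), hb⟩
        have h2' := Finset.card_erase_of_mem hbmem
        omega
      have hpos : 0 < ((s.erase a).erase b).card := by omega
      obtain ⟨c, hc⟩ := Finset.card_pos.mp hpos
      obtain ⟨hcb', hc'⟩ := Finset.mem_erase.mp hc
      obtain ⟨hca, hcs⟩ := Finset.mem_erase.mp hc'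
      have hclique' : ∀ u ∈ s.erase a, ∀ w ∈ s.erase a, u ≠ w → G.Adj u w := by
        intro u hu w hw huw
        exact hcl u (Finset.mem_of_mem_erase hu) w (Finset.mem_of_mem_erase hw) huw
      obtain ⟨q', hq'path, hq'supp, hq'len⟩ :=
        ih (s.erase a) (Finset.erase_ssubset ha) hclique' c b
          (Finset.mem_erase.mpr ⟨hca, hcs⟩) (Finset.mem_erase.mpr ⟨Ne.symm hab, hb⟩) hcb'
      have hanotin : a ∉ q'.support := by
        intro hmem
        have : a ∈ (s.erase a) := hq'supp ▸ List.mem_toFinset.mpr hmem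
        simp at this
      refine ⟨Walk.cons (hcl a ha c hcs (Ne.symm hca)) q', hq'path.cons hanotin, ?_, ?_⟩
      · simp only [Walk.support_cons, List.toFinset_cons, hq'supp]
        exact Finset.insert_erase ha
      · simp only [Walk.support_cons, List.length_cons, hq'len,
          Finset.card_erase_of_mem ha]
        have : 1 ≤ s.card := by omega
        omega

section Helpers

variable {V : Type} {G : SimpleGraph V}

lemma walk_in_set {s : Set V} (h : (G.induce s).Connected) {u w : V} (hu : u ∈ s) (hw : w ∈ s) :
    ∃ q : G.Walk u w, q.IsPath ∧ ∀ z ∈ q.support, z ∈ s := by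
  classical
  obtain ⟨q0⟩ := h.preconnected ⟨u, hu⟩ ⟨w, hw⟩
  let q1 : (G.induce s).Walk ⟨u, hu⟩ ⟨w, hw⟩ := (q0.toPath : (G.induce s).Walk _ _)
  have hq1 : q1.IsPath := q0.toPath.2
  let f := (SimpleGraph.Embedding.induce s (G := G)).toHom
  refine ⟨q1.map f, Walk.map_isPath_of_injective Subtype.val_injective hq1, ?_⟩
  intro z hz
  replace hz : z ∈ (q1.map f).support := hz
  rw [Walk.support_map, List.mem_map] at hz
  obtain ⟨⟨z', hz'⟩, _, rfl⟩ := hz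
  exact hz'

lemma walk_avoiding [Fintype V] (hconn : KConnected 2 G) (a : V) {u w : V} (hu : u ≠ a) (hw : w ≠ a) :
    ∃ q : G.Walk u w, q.IsPath ∧ a ∉ q.support := by
  classical
  have h := hconn.2 {a} (by simp)
  have hu' : u ∈ ((↑({a} : Finset V) : Set V))ᶜ := by simp [hu]
  have hw' : w ∈ ((↑({a} : Finset V) : Set V))ᶜ := by simp [hw]
  obtain ⟨q, hq, hsup⟩ := walk_in_set h hu' hw'
  refine ⟨q, hq, fun hmem => ?_⟩
  have := hsup a hmem
  simp at this

end Helpers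
section Monster
open SimpleGraph

variable {V : Type} [Fintype V] {G : SimpleGraph V}

lemma connected_case [DecidableRel G.Adj]
    (hconn : KConnected 2 G) {x y : V} (hxy : x ≠ y)
    (tri : ∀ a b c : V, a ≠ x → a ≠ y → b ≠ x → b ≠ y → c ≠ x → c ≠ y →
      a ≠ b → a ≠ c → b ≠ c → ¬ G.Adj a b → ¬ G.Adj a c → ¬ G.Adj b c → False)
    (hHconn : (G.induce ({x, y}ᶜ : Set V)).Connected)
    (p : G.Walk x y) (hp : p.IsPath)
    (hmax : ∀ q : G.Walk x y, q.IsPath → q.length ≤ p.length)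
    (v : V) (hdegv : G.degree v = G.maxDegree) (hvnot : v ∉ p.support) : False := by
  classical
  have hxs : x ∈ p.support := p.start_mem_support
  have hys : y ∈ p.support := p.end_mem_support
  have hvx : v ≠ x := fun h => hvnot (h ▸ hxs)
  have hvy : v ≠ y := fun h => hvnot (h ▸ hys)
  have hvH : v ∈ ({x, y}ᶜ : Set V) := by simp [hvx, hvy]
  have Inj := hp.getVert_injOn'
  have hgv0 : p.getVert 0 = x := p.getVert_zero
  have hgvn : p.getVert p.length = y := p.getVert_length
  -- length is at least 1
  have hn1 : 1 ≤ p.length := by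
    by_contra hcon
    have h0 : p.getVert 0 = p.getVert p.length := by congr 1; omega
    rw [hgv0, hgvn] at h0
    exact hxy h0
  -- x has a neighbor distinct from y
  have hxz : ∃ z, G.Adj x z ∧ z ≠ y := by
    by_contra hcon; push_neg at hcon
    obtain ⟨q, _, hqa⟩ := walk_avoiding hconn y hxy hvy
    obtain ⟨d, hd, _, hd2⟩ := q.exists_boundary_dart {x} rfl (by simpa using hvx)
    have hadj : G.Adj x d.snd := by
      have := d.adj
      simp only [Set.mem_singleton_iff] at *
      rwa [show d.fst = x by simpa using ‹d.fst ∈ ({x} : Set V)›] at this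
    have : d.snd = y := hcon d.snd hadj
    exact hqa (this ▸ q.dart_snd_mem_support_of_mem_darts hd)
  obtain ⟨z, hxzadj, hzy⟩ := hxz
  -- length is at least 2
  have hn2 : 2 ≤ p.length := by
    by_contra hcon
    obtain ⟨q, hqp, hqa⟩ := walk_avoiding hconn x hxzadj.ne' hxy.symm
    have hq1 : 1 ≤ q.length := by
      by_contra h0
      have hzz : q.getVert 0 = q.getVert q.length := by congr 1; omega
      rw [q.getVert_zero, q.getVert_length] at hzz
      exact hzy hzz
    have := hmax (Walk.cons hxzadj q) (hqp.cons hqa)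
    rw [Walk.length_cons] at this
    omega
  -- the off-path component of v
  set C : Set V := {c | ∃ q : G.Walk v c, ∀ w ∈ q.support, w ∉ p.support} with hC
  have hCv : v ∈ C := ⟨Walk.nil, by simpa using hvnot⟩
  have hCoff : ∀ c ∈ C, c ∉ p.support := by rintro c ⟨q, hq⟩; exact hq c q.end_mem_support
  have hCext : ∀ c ∈ C, ∀ w, G.Adj c w → w ∉ p.support → w ∈ C := by
    rintro c ⟨q, hq⟩ w hadj hw
    refine ⟨q.concat hadj, ?_⟩
    intro z hz
    rw [Walk.support_concat, List.mem_append] at hz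
    rcases hz with h | h
    · exact hq z h
    · simp only [List.mem_singleton] at h; exact h ▸ hw
  have hCpath : ∀ c ∈ C, ∀ c' ∈ C,
      ∃ q : G.Walk c c', q.IsPath ∧ ∀ w ∈ q.support, w ∉ p.support := by
    rintro c ⟨q1, hq1⟩ c' ⟨q2, hq2⟩
    refine ⟨(q1.reverse.append q2).toPath, (q1.reverse.append q2).toPath.2, ?_⟩
    intro w hw
    have hmem := Walk.support_toPath_subset _ hw
    rw [Walk.support_append, List.mem_append] at hmem
    rcases hmem with h | h
    · exact hq1 w (by rwa [Walk.support_reverse, List.mem_reverse] at h)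
    · exact hq2 w (List.mem_of_mem_tail h)
  -- attachment indices
  set Att : Set ℕ := {i | i ≤ p.length ∧ ∃ c ∈ C, G.Adj c (p.getVert i)} with hAttdef
  -- surgery wrappers
  have hW1 : ∀ i, i < p.length → ∀ c ∈ C, ∀ c' ∈ C,
      G.Adj (p.getVert i) c → G.Adj c' (p.getVert (i+1)) → False := by
    intro i hi c hc c' hc' h1 h2
    obtain ⟨q, hqp, hqd⟩ := hCpath c hc c' hc'
    exact Walk.surgery1 hp hmax q hqp hqd hi h1 h2
  have hAcons : ∀ i, i ∈ Att → (i+1) ∈ Att → False := by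
    rintro i ⟨hi, c, hc, hadj⟩ ⟨hi1, c', hc', hadj'⟩
    exact hW1 i (by omega) c hc c' hc' hadj.symm hadj'
  have hvnadj_succ : ∀ i ∈ Att, i + 1 ≤ p.length → ¬ G.Adj v (p.getVert (i+1)) := by
    rintro i ⟨hi, c, hc, hadj⟩ hi1 hvadj
    exact hW1 i (by omega) c hc v hCv hadj.symm hvadj
  have hvnadj_pred : ∀ i ∈ Att, 1 ≤ i → ¬ G.Adj v (p.getVert (i-1)) := by
    rintro i ⟨hi, c, hc, hadj⟩ hi1 hvadj
    refine hW1 (i-1) (by omega) v hCv c hc hvadj.symm ?_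
    rwa [show i - 1 + 1 = i by omega]
  have hU1 : ∀ i j, i ∈ Att → j ∈ Att → i < j → j + 2 ≤ p.length → False := by
    intro i j hiA hjA hij hj2
    obtain ⟨hi, c, hc, hadj⟩ := hiA
    obtain ⟨hj, c', hc', hadj'⟩ := hjA
    have hne1 : ¬ G.Adj (p.getVert (i+1)) (p.getVert (j+1)) := by
      intro hadj2
      obtain ⟨q, hqp, hqd⟩ := hCpath c hc c' hc'
      exact Walk.surgery2 hp hmax q hqp hqd hij (by omega) hadj.symm hadj' hadj2
    refine tri v (p.getVert (i+1)) (p.getVert (j+1)) hvx hvy ?_ ?_ ?_ ?_ ?_ ?_ ?_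
      (hvnadj_succ i ⟨hi, c, hc, hadj⟩ (by omega))
      (hvnadj_succ j ⟨hj, c', hc', hadj'⟩ (by omega)) hne1
    · exact fun h => by have := Inj _ (by omega) 0 (by omega) (h.trans hgv0.symm); omega
    · exact fun h => by have := Inj _ (by omega) p.length le_rfl (h.trans hgvn.symm); omega
    · exact fun h => by have := Inj _ (by omega) 0 (by omega) (h.trans hgv0.symm); omega
    · exact fun h => by have := Inj _ (by omega) p.length le_rfl (h.trans hgvn.symm); omega
    · exact fun h => hvnot (h ▸ p.getVert_mem_support' (i+1))
    · exact fun h => hvnot (h ▸ p.getVert_mem_support' (j+1))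
    · exact fun h => by have := Inj _ (by omega) _ (by omega) h; omega
  have hU2 : ∀ i j, i ∈ Att → j ∈ Att → i < j → 2 ≤ i → False := by
    intro i j hiA hjA hij hi2
    obtain ⟨hi, c, hc, hadj⟩ := hiA
    obtain ⟨hj, c', hc', hadj'⟩ := hjA
    have hne1 : ¬ G.Adj (p.getVert (i-1)) (p.getVert (j-1)) := by
      intro hadj2
      obtain ⟨q, hqp, hqd⟩ := hCpath c hc c' hc'
      exact Walk.surgery2' hp hmax q hqp hqd (by omega) hij hj hadj.symm hadj' hadj2
    refine tri v (p.getVert (i-1)) (p.getVert (j-1)) hvx hvy ?_ ?_ ?_ ?_ ?_ ?_ ?_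
      (hvnadj_pred i ⟨hi, c, hc, hadj⟩ (by omega))
      (hvnadj_pred j ⟨hj, c', hc', hadj'⟩ (by omega)) hne1
    · exact fun h => by have := Inj _ (by omega) 0 (by omega) (h.trans hgv0.symm); omega
    · exact fun h => by have := Inj _ (by omega) p.length le_rfl (h.trans hgvn.symm); omega
    · exact fun h => by have := Inj _ (by omega) 0 (by omega) (h.trans hgv0.symm); omega
    · exact fun h => by have := Inj _ (by omega) p.length le_rfl (h.trans hgvn.symm); omega
    · exact fun h => hvnot (h ▸ p.getVert_mem_support' (i-1))
    · exact fun h => hvnot (h ▸ p.getVert_mem_support' (j-1))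
    · exact fun h => by have := Inj _ (by omega) _ (by omega) h; omega
  -- helper: an off-path walk from a C-vertex that reaches the path yields an attachment
  have hboundary : ∀ (a b : V) (q : G.Walk a b), a ∈ C → b ∉ C →
      ∃ c ∈ C, ∃ w, G.Adj c w ∧ w ∉ C ∧ w ∈ q.support := by
    intro a b q ha hb
    obtain ⟨d, hd, hd1, hd2⟩ := q.exists_boundary_dart C ha hb
    exact ⟨d.fst, hd1, d.snd, d.adj, hd2, q.dart_snd_mem_support_of_mem_darts hd⟩
  -- there is an internal attachment index
  have hkex : ∃ k, k ∈ Att ∧ 1 ≤ k ∧ k ≤ p.length - 1 := by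
    have hu1H : p.getVert 1 ∈ ({x, y}ᶜ : Set V) := by
      simp only [Set.mem_compl_iff, Set.mem_insert_iff, Set.mem_singleton_iff]
      push_neg
      constructor
      · exact fun h => by have := Inj 1 (by omega) 0 (by omega) (h.trans hgv0.symm); omega
      · exact fun h => by have := Inj 1 (by omega) p.length le_rfl (h.trans hgvn.symm); omega
    obtain ⟨q, hqp, hqs⟩ := walk_in_set hHconn hvH hu1H
    have hu1C : p.getVert 1 ∉ C := fun h => hCoff _ h (p.getVert_mem_support' 1)
    obtain ⟨c, hc, w, hadj, hwC, hwsup⟩ := hboundary v (p.getVert 1) q hCv hu1C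
    have hwp : w ∈ p.support := by
      by_contra hwp
      exact hwC (hCext c hc w hadj hwp)
    obtain ⟨m, hm, hmle⟩ := Walk.mem_support_iff_exists_getVert.mp hwp
    have hwxy : w ∈ ({x, y}ᶜ : Set V) := hqs w hwsup
    simp only [Set.mem_compl_iff, Set.mem_insert_iff, Set.mem_singleton_iff] at hwxy
    push_neg at hwxy
    have hm0 : m ≠ 0 := fun h => hwxy.1 (by rw [← hm, h, hgv0])
    have hmn : m ≠ p.length := fun h => hwxy.2 (by rw [← hm, h, hgvn])
    exact ⟨m, ⟨hmle, c, hc, hm ▸ hadj⟩, by omega, by omega⟩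
  obtain ⟨k, hkA, hk1, hk2⟩ := hkex
  -- a second attachment index exists
  have hk'ex : ∃ k', k' ∈ Att ∧ k' ≠ k := by
    by_contra hcon; push_neg at hcon
    have hvk : v ≠ p.getVert k := fun h => hvnot (h ▸ p.getVert_mem_support' k)
    have hxk : x ≠ p.getVert k :=
      fun h => by have := Inj 0 (by omega) k (by omega) (hgv0.symm ▸ h); omega
    obtain ⟨q, hqp, hqa⟩ := walk_avoiding hconn (p.getVert k) hvk hxk
    have hxC : x ∉ C := fun h => hCoff _ h hxs
    obtain ⟨c, hc, w, hadj, hwC, hwsup⟩ := hboundary v x q hCv hxC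
    have hwp : w ∈ p.support := by
      by_contra hwp
      exact hwC (hCext c hc w hadj hwp)
    obtain ⟨m, hm, hmle⟩ := Walk.mem_support_iff_exists_getVert.mp hwp
    have hmA : m ∈ Att := ⟨hmle, c, hc, hm ▸ hadj⟩
    have := hcon m hmA
    refine hqa ?_
    rw [← this, hm]
    exact hwsup
  obtain ⟨k', hk'A, hkk'⟩ := hk'ex
  set i₀ := min k k' with hi₀def
  set j₀ := max k k' with hj₀def
  have hi₀A : i₀ ∈ Att := by
    rcases min_choice k k' with h | h <;> rw [hi₀def, h] <;> assumption
  have hj₀A : j₀ ∈ Att := by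
    rcases max_choice k k' with h | h <;> rw [hj₀def, h] <;> assumption
  have hij₀ : i₀ < j₀ := by
    rcases Nat.lt_or_ge k k' with h | h
    · rw [hi₀def, hj₀def, min_eq_left h.le, max_eq_right h.le]; exact h
    · have : k' < k := by omega
      rw [hi₀def, hj₀def, min_eq_right this.le, max_eq_left this.le]; exact this
  have hj₀n : j₀ ≤ p.length := hj₀A.1
  have hgap : i₀ + 2 ≤ j₀ := by
    by_contra hcon
    have : j₀ = i₀ + 1 := by omega
    exact hAcons i₀ hi₀A (this ▸ hj₀A)
  have hj₀big : p.length ≤ j₀ + 1 := by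
    by_contra hcon
    exact hU1 i₀ j₀ hi₀A hj₀A hij₀ (by omega)
  have hi₀small : i₀ ≤ 1 := by
    by_contra hcon
    exact hU2 i₀ j₀ hi₀A hj₀A hij₀ (by omega)
  have hkin : k = i₀ ∨ k = j₀ := by
    rcases min_choice k k' with h | h
    · left; omega
    · right
      rcases max_choice k k' with h2 | h2
      · omega
      · omega
  have hn3 : 3 ≤ p.length := by omega
  -- classification of attachment indices
  have hclass : ∀ m ∈ Att, m = i₀ ∨ m = j₀ := by
    intro m hmA
    by_contra hcon; push_neg at hcon
    obtain ⟨hmi, hmj⟩ := hcon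
    have hmle : m ≤ p.length := hmA.1
    rcases Nat.lt_or_ge m i₀ with h1 | h1
    · -- m < i₀ ≤ 1 forces m = 0, i₀ = 1, consecutive
      have hm0 : m = 0 := by omega
      have hi1 : i₀ = 1 := by omega
      exact hAcons m hmA (by rw [show m + 1 = i₀ by omega]; exact hi₀A)
    rcases Nat.lt_or_ge m j₀ with h2 | h2
    · -- i₀ < m < j₀
      rcases Nat.lt_or_ge (m+2) (p.length+1) with h3 | h3
      · exact hU1 i₀ m hi₀A hmA (by omega) (by omega)
      · -- m = p.length - 1 and j₀ = p.length
        have : m + 1 = j₀ := by omega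
        exact hAcons m hmA (this ▸ hj₀A)
    · -- j₀ < m
      have : j₀ + 1 = m := by omega
      exact hAcons j₀ hj₀A (this ▸ hmA)
  -- a non-attachment internal index m₀
  set m₀ := if j₀ = 2 then 1 else 2 with hm₀def
  have hm₀facts : 1 ≤ m₀ ∧ m₀ + 1 ≤ p.length ∧ m₀ ≠ i₀ ∧ m₀ ≠ j₀ := by
    by_cases h : j₀ = 2
    · rw [hm₀def, if_pos h]; omega
    · rw [hm₀def, if_neg h]; omega
  obtain ⟨hm₀1, hm₀2, hm₀i, hm₀j⟩ := hm₀facts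
  have hm₀nA : ∀ c ∈ C, ¬ G.Adj c (p.getVert m₀) := by
    intro c hc hadj
    rcases hclass m₀ ⟨by omega, c, hc, hadj⟩ with h | h
    exacts [hm₀i h, hm₀j h]
  have hm₀x : p.getVert m₀ ≠ x :=
    fun h => by have := Inj m₀ (by omega) 0 (by omega) (h.trans hgv0.symm); omega
  have hm₀y : p.getVert m₀ ≠ y :=
    fun h => by have := Inj m₀ (by omega) p.length le_rfl (h.trans hgvn.symm); omega
  -- C is a clique
  have hCclique : ∀ c ∈ C, ∀ c' ∈ C, c ≠ c' → G.Adj c c' := by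
    intro c hc c' hc' hne
    by_contra hnadj
    exact tri c c' (p.getVert m₀)
      (fun h => hCoff c hc (h ▸ hxs)) (fun h => hCoff c hc (h ▸ hys))
      (fun h => hCoff c' hc' (h ▸ hxs)) (fun h => hCoff c' hc' (h ▸ hys))
      hm₀x hm₀y hne
      (fun h => hCoff c hc (h ▸ p.getVert_mem_support' m₀))
      (fun h => hCoff c' hc' (h ▸ p.getVert_mem_support' m₀))
      hnadj (hm₀nA c hc) (hm₀nA c' hc')
  set Cf := (Set.toFinite C).toFinset with hCfdef
  have hCfmem : ∀ w : V, w ∈ Cf ↔ w ∈ C := fun w => Set.Finite.mem_toFinset _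
  have hvCf : v ∈ Cf := (hCfmem v).mpr hCv
  -- degree bound for v
  have hdegvle : G.degree v ≤ Cf.card + 1 := by
    have hsub : G.neighborFinset v ⊆ (Cf.erase v) ∪ {p.getVert i₀, p.getVert j₀} := by
      intro w hw
      rw [SimpleGraph.mem_neighborFinset] at hw
      by_cases hwp : w ∈ p.support
      · obtain ⟨m, hm, hmle⟩ := Walk.mem_support_iff_exists_getVert.mp hwp
        refine Finset.mem_union_right _ ?_
        rcases hclass m ⟨hmle, v, hCv, hm ▸ hw⟩ with h | h
        · rw [← hm, h]; exact Finset.mem_insert_self _ _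
        · rw [← hm, h]; exact Finset.mem_insert_of_mem (Finset.mem_singleton_self _)
      · have hwC : w ∈ C := hCext v hCv w hw hwp
        exact Finset.mem_union_left _ (Finset.mem_erase.mpr ⟨(hw.ne).symm, (hCfmem w).mpr hwC⟩)
    have h1 := Finset.card_le_card hsub
    have h2 : (Cf.erase v ∪ {p.getVert i₀, p.getVert j₀}).card ≤ (Cf.erase v).card + 2 := by
      refine le_trans (Finset.card_union_le _ _) ?_
      have : ({p.getVert i₀, p.getVert j₀} : Finset V).card ≤ 2 := by
        refine le_trans (Finset.card_insert_le _ _) ?_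
        simp
      omega
    have h3 : (Cf.erase v).card = Cf.card - 1 := Finset.card_erase_of_mem hvCf
    have h4 : 1 ≤ Cf.card := Finset.card_pos.mpr ⟨v, hvCf⟩
    have h5 : G.degree v = (G.neighborFinset v).card := rfl
    omega
  have hukx : p.getVert k ≠ x :=
    fun h => by have := Inj k (by omega) 0 (by omega) (h.trans hgv0.symm); omega
  have huky : p.getVert k ≠ y :=
    fun h => by have := Inj k (by omega) p.length le_rfl (h.trans hgvn.symm); omega
  obtain ⟨-, ck, hckC, hckadj⟩ := hkA
  by_cases hall : ∀ c ∈ C, G.Adj c (p.getVert k)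
  · -- every C-vertex attaches to u_k : its degree is too big
    have hsub : insert (p.getVert (k-1)) (insert (p.getVert (k+1)) Cf)
        ⊆ G.neighborFinset (p.getVert k) := by
      intro w hw
      rw [SimpleGraph.mem_neighborFinset]
      simp only [Finset.mem_insert] at hw
      rcases hw with rfl | rfl | hw
      · have h := p.adj_getVert_succ (i := k-1) (by omega)
        rw [show k - 1 + 1 = k by omega] at h
        exact h.symm
      · exact p.adj_getVert_succ (by omega)
      · exact (hall w ((hCfmem w).mp hw)).symm
    have h1 := Finset.card_le_card hsub
    rw [Finset.card_insert_of_notMem, Finset.card_insert_of_notMem] at h1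
    · have h5 : G.degree (p.getVert k) = (G.neighborFinset (p.getVert k)).card := rfl
      have h6 := G.degree_le_maxDegree (p.getVert k)
      omega
    · intro hcon
      exact hCoff _ ((hCfmem _).mp hcon) (p.getVert_mem_support' (k+1))
    · intro hcon
      rcases Finset.mem_insert.mp hcon with h | h
      · have := Inj (k-1) (by omega) (k+1) (by omega) h; omega
      · exact hCoff _ ((hCfmem _).mp h) (p.getVert_mem_support' (k-1))
  · push_neg at hall
    obtain ⟨ca, hcaC, hcak⟩ := hall
    -- a pair of distinct attachers for u_{i₀} and u_{j₀}
    have hpair : ∃ ci ∈ C, ∃ cj ∈ C, ci ≠ cj ∧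
        G.Adj ci (p.getVert i₀) ∧ G.Adj cj (p.getVert j₀) := by
      obtain ⟨-, c1, hc1, hadj1⟩ := hi₀A
      obtain ⟨-, c2, hc2, hadj2⟩ := hj₀A
      by_cases h12 : c1 ≠ c2
      · exact ⟨c1, hc1, c2, hc2, h12, hadj1, hadj2⟩
      push_neg at h12
      have hcastar : ca ≠ c1 := by
        intro h
        apply hcak
        rcases hkin with hk | hk
        · rw [h, hk]; exact hadj1
        · rw [h, hk, h12]; exact hadj2
      have hxstar : x ≠ c1 := fun h => hCoff c1 hc1 (h ▸ hxs)
      obtain ⟨q, hqp, hqa⟩ := walk_avoiding hconn c1 hcastar hxstar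
      obtain ⟨d, hd, hd1, hd2⟩ := q.exists_boundary_dart {z | z ∈ C ∧ z ≠ c1}
        ⟨hcaC, hcastar⟩ (fun h => hCoff x h.1 hxs)
      have hsnd_ne : d.snd ≠ c1 := by
        intro h
        exact hqa (h ▸ q.dart_snd_mem_support_of_mem_darts hd)
      have hsndC : d.snd ∉ C := fun h => hd2 ⟨h, hsnd_ne⟩
      have hsndp : d.snd ∈ p.support := by
        by_contra hcon
        exact hsndC (hCext d.fst hd1.1 d.snd d.adj hcon)
      obtain ⟨m, hm, hmle⟩ := Walk.mem_support_iff_exists_getVert.mp hsndp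
      have hadjm : G.Adj d.fst (p.getVert m) := hm.symm ▸ d.adj
      rcases hclass m ⟨hmle, d.fst, hd1.1, hadjm⟩ with h | h
      · exact ⟨d.fst, hd1.1, c2, hc2, fun hh => hd1.2 (hh.trans h12.symm), h ▸ hadjm, hadj2⟩
      · exact ⟨c1, hc1, d.fst, hd1.1, fun hh => hd1.2 hh.symm, hadj1, h ▸ hadjm⟩
    obtain ⟨ci, hciC, cj, hcjC, hcij, hadjci, hadjcj⟩ := hpair
    have hCfclique : ∀ a ∈ Cf, ∀ b ∈ Cf, a ≠ b → G.Adj a b := fun a ha b hb hab =>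
      hCclique a ((hCfmem a).mp ha) b ((hCfmem b).mp hb) hab
    obtain ⟨ham, hhamp, hhamsupp, hhamlen⟩ := clique_hamPath G Cf hCfclique ci cj
      ((hCfmem ci).mpr hciC) ((hCfmem cj).mpr hcjC) hcij
    have hhamdis : ∀ w ∈ ham.support, w ∉ p.support := by
      intro w hw
      have : w ∈ Cf := hhamsupp ▸ List.mem_toFinset.mpr hw
      exact hCoff w ((hCfmem w).mp this)
    have hs3 := Walk.surgery3 hp hmax ham hhamp hhamdis hgap hj₀n hadjci.symm hadjcj
    have hlensup : ham.support.length = ham.length + 1 := Walk.length_support ham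
    have hCfbound : Cf.card + 1 ≤ j₀ - i₀ := by omega
    -- all middle vertices are adjacent to u_k
    have hquad : ∀ m, i₀ < m → m < j₀ → G.Adj (p.getVert m) (p.getVert k) := by
      intro m h1 h2
      by_contra hnadj
      have hmnA : ¬ G.Adj ca (p.getVert m) := by
        intro hadj
        rcases hclass m ⟨by omega, ca, hcaC, hadj⟩ with h | h <;> omega
      have hm_x : p.getVert m ≠ x :=
        fun h => by have := Inj m (by omega) 0 (by omega) (h.trans hgv0.symm); omega
      have hm_y : p.getVert m ≠ y :=
        fun h => by have := Inj m (by omega) p.length le_rfl (h.trans hgvn.symm); omega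
      have hmk : p.getVert m ≠ p.getVert k := fun h => by
        have := Inj m (by omega) k (by omega) h
        rcases hkin with hh | hh <;> omega
      exact tri ca (p.getVert m) (p.getVert k)
        (fun h => hCoff ca hcaC (h ▸ hxs)) (fun h => hCoff ca hcaC (h ▸ hys))
        hm_x hm_y hukx huky
        (fun h => hCoff ca hcaC (h ▸ p.getVert_mem_support' m))
        (fun h => hCoff ca hcaC (h ▸ p.getVert_mem_support' k))
        hmk hmnA hcak hnadj
    set o : ℕ := if k = i₀ then i₀ - 1 else j₀ + 1 with ho
    have hkio : (k = i₀ ∧ o = i₀ - 1) ∨ (k = j₀ ∧ o = j₀ + 1) := by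
      by_cases h : k = i₀
      · left; exact ⟨h, by rw [ho, if_pos h]⟩
      · right
        rcases hkin with h' | h'
        · exact absurd h' h
        · exact ⟨h', by rw [ho, if_neg h]⟩
    have hole : o ≤ p.length := by rcases hkio with ⟨h1, h2⟩ | ⟨h1, h2⟩ <;> omega
    have hadjo : G.Adj (p.getVert k) (p.getVert o) := by
      rcases hkio with ⟨h1, h2⟩ | ⟨h1, h2⟩
      · have h := p.adj_getVert_succ (i := i₀ - 1) (by omega)
        rw [show i₀ - 1 + 1 = i₀ by omega] at h
        rw [h1, h2]; exact h.symm
      · have h := p.adj_getVert_succ (i := j₀) (by omega)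
        rw [h1, h2]; exact h
    set Qimg := (Finset.Ioo i₀ j₀).image p.getVert with hQ
    have hQcard : Qimg.card = j₀ - i₀ - 1 := by
      rw [hQ, Finset.card_image_of_injOn, Nat.card_Ioo]
      intro a ha b hb hab
      exact Inj a (by have := Finset.mem_Ioo.mp ha; omega) b
        (by have := Finset.mem_Ioo.mp hb; omega) hab
    have hsub : insert ck (insert (p.getVert o) Qimg) ⊆ G.neighborFinset (p.getVert k) := by
      intro w hw
      rw [SimpleGraph.mem_neighborFinset]
      simp only [Finset.mem_insert] at hw
      rcases hw with rfl | rfl | hw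
      · exact hckadj.symm
      · exact hadjo
      · rw [hQ, Finset.mem_image] at hw
        obtain ⟨m, hm, rfl⟩ := hw
        have hmo := Finset.mem_Ioo.mp hm
        exact (hquad m hmo.1 hmo.2).symm
    have h1 := Finset.card_le_card hsub
    rw [Finset.card_insert_of_notMem, Finset.card_insert_of_notMem, hQcard] at h1
    · have h5 : G.degree (p.getVert k) = (G.neighborFinset (p.getVert k)).card := rfl
      have h6 := G.degree_le_maxDegree (p.getVert k)
      omega
    · intro hcon
      rw [hQ, Finset.mem_image] at hcon
      obtain ⟨m, hm, hmeq⟩ := hcon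
      have hmo := Finset.mem_Ioo.mp hm
      have := Inj m (by omega) o hole hmeq
      rcases hkio with ⟨h1', h2'⟩ | ⟨h1', h2'⟩ <;> omega
    · intro hcon
      rcases Finset.mem_insert.mp hcon with h | h
      · exact hCoff ck hckC (h ▸ p.getVert_mem_support' o)
      · rw [hQ, Finset.mem_image] at h
        obtain ⟨m, hm, hmeq⟩ := h
        exact hCoff ck hckC (hmeq ▸ p.getVert_mem_support' m)

end Monster

/-- If `G` is 2-connected and the independence number of `G - {x, y}` is at most `2`,
then either every `xy`-fiber contains every vertex of maximum degree, or
`G - {x, y}` is the disjoint union of two complete graphs. -/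
theorem xy_fiber_contains_max_degree_or_two_cliques
    {V : Type} [Fintype V] (G : SimpleGraph V) [DecidableRel G.Adj]
    (hconn : KConnected 2 G) (x y : V) (hxy : x ≠ y)
    (hα : ∀ s : Finset V, x ∉ s → y ∉ s →
      (∀ a ∈ s, ∀ b ∈ s, a ≠ b → ¬ G.Adj a b) → s.card ≤ 2) :
    (∀ (p : G.Walk x y), IsXYFiber G p →
      ∀ v : V, G.degree v = G.maxDegree → v ∈ p.support) ∨
    ((∃ c₁ c₂ : (G.induce ({x, y}ᶜ : Set V)).ConnectedComponent, c₁ ≠ c₂ ∧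
        ∀ c : (G.induce ({x, y}ᶜ : Set V)).ConnectedComponent, c = c₁ ∨ c = c₂) ∧
      ∀ a b : ({x, y}ᶜ : Set V), (G.induce ({x, y}ᶜ : Set V)).Reachable a b → a ≠ b →
        (G.induce ({x, y}ᶜ : Set V)).Adj a b) := by
  classical
  have tri : ∀ a b c : V, a ≠ x → a ≠ y → b ≠ x → b ≠ y → c ≠ x → c ≠ y →
      a ≠ b → a ≠ c → b ≠ c → ¬ G.Adj a b → ¬ G.Adj a c → ¬ G.Adj b c → False := by
    intro a b c hax hay hbx hby hcx hcy hab hac hbc h1 h2 h3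
    have hcard : ({a, b, c} : Finset V).card = 3 := by
      rw [Finset.card_insert_of_notMem (by simp [hab, hac]),
        Finset.card_insert_of_notMem (by simp [hbc]), Finset.card_singleton]
    have := hα {a, b, c} (by simp [Ne.symm hax, Ne.symm hbx, Ne.symm hcx])
      (by simp [Ne.symm hay, Ne.symm hby, Ne.symm hcy]) ?_
    · omega
    · intro u hu w hw huw
      simp only [Finset.mem_insert, Finset.mem_singleton] at hu hw
      rcases hu with rfl | rfl | rfl <;> rcases hw with rfl | rfl | rfl <;>
        first
          | exact absurd rfl huw
          | assumption
          | exact fun hadj => h1 hadj.symm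
          | exact fun hadj => h2 hadj.symm
          | exact fun hadj => h3 hadj.symm
  set Hs : Set V := ({x, y}ᶜ : Set V) with hHs
  by_cases hHne : Nonempty Hs
  swap
  · -- no vertices outside {x,y}: left disjunct trivially
    left
    intro p hfib v hv
    by_cases hvx : v = x
    · exact hvx ▸ p.start_mem_support
    by_cases hvy : v = y
    · exact hvy ▸ p.end_mem_support
    · exact absurd ⟨⟨v, by simp [hHs, hvx, hvy]⟩⟩ hHne
  by_cases hHconn : (G.induce Hs).Connected
  · left
    intro p hfib v hdegv
    by_contra hvnot
    exact connected_case hconn hxy tri hHconn p hfib.1 hfib.2 v hdegv hvnot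
  · -- H disconnected: two cliques
    right
    have hpre : ¬ (G.induce Hs).Preconnected := fun h => hHconn ((connected_iff _).mpr ⟨h, hHne⟩)
    rw [SimpleGraph.Preconnected] at hpre
    push_neg at hpre
    obtain ⟨a, b, hab⟩ := hpre
    have hmemne : ∀ z : Hs, (z : V) ≠ x ∧ (z : V) ≠ y := by
      rintro ⟨z, hz⟩
      simp only [hHs, Set.mem_compl_iff, Set.mem_insert_iff, Set.mem_singleton_iff] at hz
      push_neg at hz
      exact hz
    have key : ∀ u w : Hs, ¬ (G.induce Hs).Reachable u w → ¬ G.Adj u w := by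
      intro u w hr hadj
      exact hr ⟨Walk.cons (by exact hadj : (G.induce Hs).Adj u w) Walk.nil⟩
    constructor
    · refine ⟨(G.induce Hs).connectedComponentMk a, (G.induce Hs).connectedComponentMk b, ?_, ?_⟩
      · intro h
        exact hab (SimpleGraph.ConnectedComponent.eq.mp h)
      · intro c
        induction c using SimpleGraph.ConnectedComponent.ind with
        | _ z => ?_
        by_contra hcon
        push_neg at hcon
        obtain ⟨h1, h2⟩ := hcon
        have hza : ¬ (G.induce Hs).Reachable z a := fun h => h1 (ConnectedComponent.eq.mpr h)
        have hzb : ¬ (G.induce Hs).Reachable z b := fun h => h2 (ConnectedComponent.eq.mpr h)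
        -- z, a, b pairwise distinct and nonadjacent
        have hzax : z ≠ a := fun h => hza (h ▸ Reachable.refl z)
        have hzbx : z ≠ b := fun h => hzb (h ▸ Reachable.refl z)
        have habx : a ≠ b := fun h => hab (h ▸ Reachable.refl a)
        refine tri z a b (hmemne z).1 (hmemne z).2 (hmemne a).1 (hmemne a).2
          (hmemne b).1 (hmemne b).2 ?_ ?_ ?_ ?_ ?_ ?_
        · exact fun h => hzax (Subtype.ext h)
        · exact fun h => hzbx (Subtype.ext h)
        · exact fun h => habx (Subtype.ext h)
        · exact key z a hza
        · exact key z b hzb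
        · exact key a b hab
    · intro u w hr huw
      by_contra hnadj
      have hnadj' : ¬ G.Adj u w := fun h => hnadj (by exact h : (G.induce Hs).Adj u w)
      -- pick a vertex in the other component
      have : ∃ z : Hs, ¬ (G.induce Hs).Reachable u z := by
        by_cases hua : (G.induce Hs).Reachable u a
        · exact ⟨b, fun h => hab (hua.symm.trans h)⟩
        · exact ⟨a, hua⟩
      obtain ⟨z, hz⟩ := this
      have hwz : ¬ (G.induce Hs).Reachable w z := fun h => hz (hr.trans h)
      have huzx : u ≠ z := fun h => hz (h ▸ Reachable.refl u)
      have hwzx : w ≠ z := fun h => hwz (h ▸ Reachable.refl w)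
      refine tri u w z (hmemne u).1 (hmemne u).2 (hmemne w).1 (hmemne w).2
        (hmemne z).1 (hmemne z).2 ?_ ?_ ?_ hnadj' (key u z hz) (key w z hwz)
      · exact fun h => huw (Subtype.ext h)
      · exact fun h => huzx (Subtype.ext h)
      · exact fun h => hwzx (Subtype.ext h)
end

section
/- Let G be a finite simple graph, let P = v_0 v_1 ⋯ v_ℓ be a path in G with endpoints x = v_0 and y = v_ℓ, and let H be a connected component of G − V(P) having a neighbor v_i on P (i.e., some vertex of H is adjacent to v_i). If P is an x-fiber, then i < ℓ, and moreover if i > 0 then v_ℓ and v_{i−1} are not adjacent in G. -/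
open SimpleGraph

/-- `p` is an `x`-fiber of `G`: a longest path among all paths having `x` as an
endpoint. -/
def IsXFiber {V : Type} (G : SimpleGraph V) {x y : V} (p : G.Walk x y) : Prop :=
  p.IsPath ∧ ∀ (z : V) (q : G.Walk x z), q.IsPath → q.length ≤ p.length

/-!
A longest path from `x` cannot be extended at its far end `y`, so every neighbour of `y` lies
on it. If `y` is adjacent to `v_{i-1}`, the Pósa rotation `v₀ ⋯ v_{i-1} y v_{ℓ-1} ⋯ v_i` is
another longest path from `x`, with the same vertex set and far end `v_i`; so `v_i`, too, has
no neighbour off the path.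
-/

namespace SimpleGraph.Walk

variable {V : Type} {G : SimpleGraph V} {x y : V}

lemma lt_length_of_adj_getVert {p : G.Walk x y} {j : ℕ} (hadj : G.Adj (p.getVert j) y) :
    j < p.length := by
  by_contra! hle
  rw [p.getVert_of_length_le hle] at hadj
  exact hadj.ne rfl

/-- Pósa rotation: from `x ⋯ v_j v_{j+1} ⋯ y` and an edge `v_j y`, the path
`x ⋯ v_j y ⋯ v_{j+1}`. -/
def posaRotation (p : G.Walk x y) (j : ℕ) (hadj : G.Adj (p.getVert j) y) :
    G.Walk x (p.getVert (j + 1)) :=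
  (p.take j).append (cons hadj (p.drop (j + 1)).reverse)

variable {p : G.Walk x y} {j : ℕ} {hadj : G.Adj (p.getVert j) y}

lemma support_posaRotation :
    (p.posaRotation j hadj).support =
      p.support.take (j + 1) ++ (p.support.drop (j + 1)).reverse := by
  have hj := lt_length_of_adj_getVert hadj
  rw [posaRotation, support_append, support_cons, List.tail_cons, support_reverse,
    support_take, drop_support_eq_support_drop_min, min_eq_left hj]

lemma support_posaRotation_perm : (p.posaRotation j hadj).support.Perm p.support := by
  rw [support_posaRotation]
  exact ((List.reverse_perm _).append_left _).trans (by rw [List.take_append_drop])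

@[simp]
lemma length_posaRotation : (p.posaRotation j hadj).length = p.length := by
  have hj := lt_length_of_adj_getVert hadj
  simp only [posaRotation, length_append, length_cons, length_reverse, take_length,
    drop_length]
  omega

lemma IsPath.posaRotation (hp : p.IsPath) : (p.posaRotation j hadj).IsPath := by
  rw [isPath_def, support_posaRotation_perm.nodup_iff]
  exact hp.support_nodup

end SimpleGraph.Walk

open SimpleGraph.Walk

namespace IsXFiber

variable {V : Type} {G : SimpleGraph V} {x y : V} {p : G.Walk x y}

lemma mem_support_of_adj (hp : IsXFiber G p) {v : V} (hv : G.Adj y v) : v ∈ p.support := by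
  by_contra hnot
  have := hp.2 v _ (hp.1.concat hnot hv)
  rw [length_concat] at this
  omega

lemma posaRotation (hp : IsXFiber G p) {j : ℕ} (hadj : G.Adj (p.getVert j) y) :
    IsXFiber G (p.posaRotation j hadj) :=
  ⟨hp.1.posaRotation, fun z q hq => (hp.2 z q hq).trans_eq length_posaRotation.symm⟩

end IsXFiber

theorem x_fiber_attachment_general
    {V : Type} (G : SimpleGraph V) {x y : V}
    (p : G.Walk x y) (hp : IsXFiber G p)
    (i : ℕ)
    (h : {v : V | v ∉ p.support})
    (hadj : G.Adj ↑h (p.getVert i)) :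
    i < p.length ∧ (0 < i → ¬ G.Adj y (p.getVert (i - 1))) := by
  have hh : (h : V) ∉ p.support := h.2
  have hi : i < p.length := by
    by_contra! hle
    rw [p.getVert_of_length_le hle] at hadj
    exact hh (hp.mem_support_of_adj hadj.symm)
  refine ⟨hi, fun hi0 hy => hh ?_⟩
  obtain ⟨j, rfl⟩ : ∃ j, i = j + 1 := ⟨i - 1, by omega⟩
  exact support_posaRotation_perm.subset
    ((hp.posaRotation hy.symm).mem_support_of_adj hadj.symm)

/-- Let `P = v₀ ⋯ v_ℓ` be an `x`-fiber with `x = v₀`, `y = v_ℓ`, and let `H` be a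
component of `G - V(P)` with a neighbor `vᵢ` on `P`. Then `i < ℓ`, and if `i > 0`
then `y v_{i-1} ∉ E(G)`. -/
theorem x_fiber_attachment
    {V : Type} [Fintype V] (G : SimpleGraph V) {x y : V}
    (p : G.Walk x y) (hp : IsXFiber G p)
    (C : (G.induce {v : V | v ∉ p.support}).ConnectedComponent)
    (i : ℕ) (hi : i ≤ p.length)
    (h : {v : V | v ∉ p.support})
    (hC : (G.induce {v : V | v ∉ p.support}).connectedComponentMk h = C)
    (hadj : G.Adj ↑h (p.getVert i)) :
    i < p.length ∧ (0 < i → ¬ G.Adj y (p.getVert (i - 1))) :=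
  x_fiber_attachment_general G p hp i h hadj
end

section
/- Let G be a finite simple graph, let P be a longest path in G, and let H be a connected component of G − V(P). Then no two attachment points of H are consecutive vertices of P; that is, if s and s' are distinct vertices of P each having a neighbor in H, then s and s' are not adjacent along P. -/
open SimpleGraph

/-!
If the attachment points `s = P i` and `s' = P (i + 1)` were consecutive on `P`, with neighbours
`h` and `h'` in the same component `H`, then a path from `h` to `h'` inside `H` could replace the
edge `s s'` of `P`: the detour `s, h, …, h', s'` avoids `V(P)`, so the result is a path strictly
longer than `P`.
-/

namespace SimpleGraph

variable {V : Type} {G : SimpleGraph V}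

theorem Walk.exists_eq_append_cons_of_lt_length {u v : V} (p : G.Walk u v) {i : ℕ}
    (hi : i < p.length) :
    ∃ (a b : V) (p₁ : G.Walk u a) (hab : G.Adj a b) (p₂ : G.Walk b v),
      p = p₁.append (.cons hab p₂) ∧ p.getVert i = a ∧ p.getVert (i + 1) = b := by
  induction p generalizing i with
  | nil => simp at hi
  | @cons u w v huw q ih =>
    cases i with
    | zero => exact ⟨u, w, .nil, huw, q, rfl, rfl, by simp⟩
    | succ i =>
      obtain ⟨a, b, p₁, hab, p₂, rfl, ha, hb⟩ := ih (by simpa using hi)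
      exact ⟨a, b, .cons huw p₁, hab, p₂, rfl, ha, hb⟩

theorem Walk.IsPath.append_cons_append_cons {x a b c d y : V} {p₁ : G.Walk x a}
    {p₂ : G.Walk b y} {q : G.Walk c d} {hab : G.Adj a b}
    (hp : (p₁.append (.cons hab p₂)).IsPath) (hq : q.IsPath)
    (hdisj : ∀ w ∈ q.support, w ∉ (p₁.append (.cons hab p₂)).support)
    (hac : G.Adj a c) (hdb : G.Adj d b) :
    (p₁.append (.cons hac (q.append (.cons hdb p₂)))).IsPath := by
  rw [Walk.isPath_def] at hp hq ⊢
  simp only [Walk.support_append, Walk.support_cons, List.tail_cons] at hp hdisj ⊢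
  have hperm : (p₁.support ++ (q.support ++ p₂.support)).Perm
      (q.support ++ (p₁.support ++ p₂.support)) := by
    rw [← List.append_assoc, ← List.append_assoc]
    exact List.perm_append_comm.append_right _
  exact hperm.nodup_iff.mpr
    (List.nodup_append.mpr ⟨hq, hp, fun w hw w' hw' h => hdisj w hw (h ▸ hw')⟩)

theorem Reachable.exists_isPath_support_subset_of_induce {s : Set V} {a b : s}
    (h : (G.induce s).Reachable a b) :
    ∃ q : G.Walk a b, q.IsPath ∧ ∀ w ∈ q.support, w ∈ s := by
  obtain ⟨q, hq⟩ := h.exists_isPath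
  refine ⟨q.map (Embedding.induce s).toHom, hq.map Subtype.val_injective, fun w hw => ?_⟩
  obtain ⟨w, -, rfl⟩ := List.mem_map.mp (Walk.support_map _ q ▸ hw)
  exact w.2

end SimpleGraph

theorem IsLongestPath.not_adj_getVert_succ_of_reachable {V : Type} {G : SimpleGraph V}
    {x y : V} {p : G.Walk x y} (hp : IsLongestPath G p) {i : ℕ} (hi : i < p.length)
    {h h' : {v : V | v ∉ p.support}} (hr : (G.induce {v : V | v ∉ p.support}).Reachable h h')
    (hh : G.Adj h (p.getVert i)) : ¬ G.Adj h' (p.getVert (i + 1)) := by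
  intro hh'
  obtain ⟨q, hq, hq_out⟩ := hr.exists_isPath_support_subset_of_induce
  obtain ⟨a, b, p₁, hab, p₂, hp_eq, ha, hb⟩ := p.exists_eq_append_cons_of_lt_length hi
  rw [ha] at hh
  rw [hb] at hh'
  have hdisj : ∀ w ∈ q.support, w ∉ (p₁.append (.cons hab p₂)).support :=
    fun w hw => hp_eq ▸ (hq_out w hw : w ∉ p.support)
  have hlonger := (hp_eq ▸ hp.1).append_cons_append_cons hq hdisj hh.symm hh'
  have hle := hp.2 _ _ _ hlonger
  simp only [hp_eq, Walk.length_append, Walk.length_cons] at hle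
  omega

theorem attachment_points_not_consecutive_general
    {V : Type} (G : SimpleGraph V) {x y : V}
    (p : G.Walk x y) (hp : IsLongestPath G p)
    (C : (G.induce {v : V | v ∉ p.support}).ConnectedComponent)
    (s s' : V)
    (hats : ∃ h : {v : V | v ∉ p.support},
      (G.induce {v : V | v ∉ p.support}).connectedComponentMk h = C ∧ G.Adj ↑h s)
    (hats' : ∃ h : {v : V | v ∉ p.support},
      (G.induce {v : V | v ∉ p.support}).connectedComponentMk h = C ∧ G.Adj ↑h s') :
    ¬ ∃ i : ℕ, i < p.length ∧
      ((p.getVert i = s ∧ p.getVert (i + 1) = s') ∨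
       (p.getVert i = s' ∧ p.getVert (i + 1) = s)) := by
  rintro ⟨i, hi, hconsec⟩
  obtain ⟨h, rfl, hs⟩ := hats
  obtain ⟨h', hC, hs'⟩ := hats'
  have hr : (G.induce {v : V | v ∉ p.support}).Reachable h' h := ConnectedComponent.exact hC
  rcases hconsec with ⟨rfl, rfl⟩ | ⟨rfl, rfl⟩
  · exact hp.not_adj_getVert_succ_of_reachable hi hr.symm hs hs'
  · exact hp.not_adj_getVert_succ_of_reachable hi hr hs' hs

/-- If `P` is a longest path in `G` and `H` is a component of `G - V(P)`, then no
two attachment points of `H` are consecutive on `P`. -/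
theorem attachment_points_not_consecutive
    {V : Type} [Fintype V] (G : SimpleGraph V) {x y : V}
    (p : G.Walk x y) (hp : IsLongestPath G p)
    (C : (G.induce {v : V | v ∉ p.support}).ConnectedComponent)
    (s s' : V) (hs : s ∈ p.support) (hs' : s' ∈ p.support) (hne : s ≠ s')
    (hats : ∃ h : {v : V | v ∉ p.support},
      (G.induce {v : V | v ∉ p.support}).connectedComponentMk h = C ∧ G.Adj ↑h s)
    (hats' : ∃ h : {v : V | v ∉ p.support},
      (G.induce {v : V | v ∉ p.support}).connectedComponentMk h = C ∧ G.Adj ↑h s') :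
    ¬ ∃ i : ℕ, i < p.length ∧
      ((p.getVert i = s ∧ p.getVert (i + 1) = s') ∨
       (p.getVert i = s' ∧ p.getVert (i + 1) = s)) :=
  attachment_points_not_consecutive_general G p hp C s s' hats hats'
end

section
/- Let G be a finite simple graph, let P be a longest path in G, let H be a connected component of G − V(P), and let k be the number of attachment points of H on P. Then there exists an independent set A of G with A ⊆ V(P), |A| ≥ k + 1, such that no edge of G joins a vertex of A and a vertex of H. -/
open SimpleGraph

/-- The attachment points on `p` of the component `C` of `G - V(p)`: the vertices of
`p` having a neighbor in `C`. -/
def attachPoints {V : Type} (G : SimpleGraph V) {x y : V} (p : G.Walk x y)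
    (C : (G.induce {v : V | v ∉ p.support}).ConnectedComponent) : Set V :=
  {s : V | s ∈ p.support ∧ ∃ h : {v : V | v ∉ p.support},
    (G.induce {v : V | v ∉ p.support}).connectedComponentMk h = C ∧ G.Adj ↑h s}

/-
Write `P = v₀ v₁ … vₙ`. Every contradiction comes from rerouting `P` into a sequence of
distinct vertices, consecutive ones adjacent, that uses every vertex of `P` and at least one
vertex outside it: a path longer than `P`.

Neither endpoint is an attachment point (extend `P` into `H`), and the successor `vᵢ₊₁` of an
attachment point `vᵢ` is not one either (go `v₀ … vᵢ`, through `H`, then `vᵢ₊₁ … vₙ`); in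
particular `A = {v₀} ∪ {vᵢ₊₁ | vᵢ an attachment point}` has `k + 1` elements and no neighbour in
`H`. It is independent: if `v₀ ~ vᵢ₊₁`, take `h vᵢ vᵢ₋₁ … v₀ vᵢ₊₁ … vₙ` for a neighbour `h ∈ H`
of `vᵢ`; if `vᵢ₊₁ ~ vⱼ₊₁` with `i < j`, take `v₀ … vᵢ`, through `H` to `vⱼ`, then
`vⱼ₋₁ … vᵢ₊₁ vⱼ₊₁ … vₙ`.
-/

namespace SimpleGraph

variable {V : Type} {G : SimpleGraph V}

lemma isChain_adj_reverse {l : List V} (h : l.IsChain G.Adj) : l.reverse.IsChain G.Adj :=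
  List.isChain_reverse.2 (h.imp fun _ _ hab => hab.symm)

namespace Walk

variable {x y : V}

lemma support_eq_take_append_cons_cons (p : G.Walk x y) {k : ℕ} (hk : k < p.length) :
    p.support = p.support.take k ++ p.getVert k :: p.getVert (k + 1) :: p.support.drop (k + 2) := by
  rw [p.getVert_eq_support_getElem hk.le, p.getVert_eq_support_getElem hk,
    ← List.drop_eq_getElem_cons, ← List.drop_eq_getElem_cons, List.take_append_drop]

lemma exists_support_eq_append_cons_cons (p : G.Walk x y) {k : ℕ} (hk : k < p.length) :
    ∃ T D, p.support = T ++ p.getVert k :: p.getVert (k + 1) :: D :=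
  ⟨_, _, p.support_eq_take_append_cons_cons hk⟩

lemma exists_support_eq_append_cons_cons_append_cons_cons (p : G.Walk x y) {k l : ℕ}
    (hkl : k + 2 ≤ l) (hl : l < p.length) :
    ∃ T R D, p.support =
      T ++ p.getVert k :: p.getVert (k + 1) :: (R ++ p.getVert l :: p.getVert (l + 1) :: D) := by
  refine ⟨p.support.take k, (p.support.drop (k + 2)).take (l - (k + 2)),
    p.support.drop (l + 2), ?_⟩
  have hdrop : (p.support.drop (k + 2)).drop (l - (k + 2)) = p.support.drop l := by
    rw [List.drop_drop]; congr 1; omega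
  rw [p.getVert_eq_support_getElem hl.le, p.getVert_eq_support_getElem hl,
    ← List.drop_eq_getElem_cons, ← List.drop_eq_getElem_cons, ← hdrop, List.take_append_drop,
    ← p.support_eq_take_append_cons_cons (by omega)]

open Classical in
noncomputable def attachIndices (p : G.Walk x y)
    (C : (G.induce {v : V | v ∉ p.support}).ConnectedComponent) : Finset ℕ :=
  (Finset.range p.length).filter fun k => p.getVert k ∈ attachPoints G p C

open Classical in
noncomputable def startAndSuccessors (p : G.Walk x y)
    (C : (G.induce {v : V | v ∉ p.support}).ConnectedComponent) : Finset V :=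
  insert x ((p.attachIndices C).image fun k => p.getVert (k + 1))

variable {p : G.Walk x y} {C : (G.induce {v : V | v ∉ p.support}).ConnectedComponent}

lemma exists_detour_of_mem_attachPoints {s t : V} (hs : s ∈ attachPoints G p C)
    (ht : t ∈ attachPoints G p C) :
    ∃ M : List V, M ≠ [] ∧ M.Nodup ∧ (∀ v ∈ M, v ∉ p.support) ∧
      (s :: M ++ [t]).IsChain G.Adj := by
  obtain ⟨-, a, rfl, has⟩ := hs
  obtain ⟨-, b, hb, hbt⟩ := ht
  obtain ⟨w, hw⟩ := (ConnectedComponent.exact hb.symm).exists_isPath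
  let f := Embedding.induce (G := G) {v : V | v ∉ p.support}
  let w' := w.map f.toHom
  refine ⟨w'.support, w'.support_ne_nil, (hw.map f.injective).support_nodup, ?_, ?_⟩
  · simp only [w', support_map, List.mem_map]
    rintro _ ⟨v, -, rfl⟩
    exact v.2
  · have hsa : G.Adj s (f a) := has.symm
    have hbt : G.Adj (f b) t := hbt
    simpa [support_concat] using (cons hsa (w'.concat hbt)).isChain_adj_support

lemma mem_attachIndices {k : ℕ} :
    k ∈ p.attachIndices C ↔ k < p.length ∧ p.getVert k ∈ attachPoints G p C := by
  simp [attachIndices]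

lemma mem_support_of_mem_startAndSuccessors {a : V} (ha : a ∈ p.startAndSuccessors C) :
    a ∈ p.support := by
  simp only [startAndSuccessors, Finset.mem_insert, Finset.mem_image] at ha
  rcases ha with rfl | ⟨k, -, rfl⟩
  exacts [p.start_mem_support, p.getVert_mem_support _]

lemma card_startAndSuccessors (hp : p.IsPath) :
    (p.startAndSuccessors C).card = (p.attachIndices C).card + 1 := by
  classical
  have hlt : ∀ k ∈ p.attachIndices C, k + 1 ≤ p.length := fun k hk =>
    (mem_attachIndices.1 hk).1
  rw [startAndSuccessors, Finset.card_insert_of_notMem, Finset.card_image_of_injOn]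
  · intro k hk l hl hkl
    have := hp.getVert_injOn (hlt k hk) (hlt l hl) hkl
    omega
  · simp only [Finset.mem_image, not_exists, not_and]
    intro k hk hkx
    have := hp.getVert_injOn (hlt k hk) (Nat.zero_le _) (hkx.trans p.getVert_zero.symm)
    omega

end Walk

end SimpleGraph

namespace IsLongestPath

open Walk

variable {V : Type} {G : SimpleGraph V} {x y : V} {p : G.Walk x y}
  {C : (G.induce {v : V | v ∉ p.support}).ConnectedComponent}

lemma length_le_of_isChain (hp : IsLongestPath G p) {l : List V} (hc : l.IsChain G.Adj)
    (hn : l.Nodup) :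
    l.length ≤ p.support.length := by
  rcases eq_or_ne l [] with rfl | hne
  · exact Nat.zero_le _
  have := hp.2 _ _ (ofSupport l hne hc) (by rwa [isPath_def, support_ofSupport])
  rw [length_ofSupport] at this
  rw [length_support]
  omega

lemma not_isChain_of_perm_append (hp : IsLongestPath G p) {M l : List V} (hM : M ≠ [])
    (hMn : M.Nodup) (hMp : ∀ v ∈ M, v ∉ p.support) (hl : l.Perm (p.support ++ M)) :
    ¬ l.IsChain G.Adj := by
  intro hc
  have hn : (p.support ++ M).Nodup :=
    List.nodup_append.2 ⟨hp.1.support_nodup, hMn, fun a ha b hb hab => hMp b hb (hab ▸ ha)⟩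
  have := hp.length_le_of_isChain hc (hl.nodup_iff.2 hn)
  rw [hl.length_eq, List.length_append] at this
  exact hM (List.length_eq_zero_iff.1 (by omega))

variable (hp : IsLongestPath G p)
include hp

lemma end_notMem_attachPoints : y ∉ attachPoints G p C := by
  rintro ⟨-, h, -, hyh⟩
  refine hp.not_isChain_of_perm_append (M := [h]) (List.cons_ne_nil _ _)
    (List.nodup_singleton _) (List.forall_mem_singleton.2 h.2) (List.Perm.refl _) ?_
  simpa [support_concat] using (p.concat hyh.symm).isChain_adj_support

lemma start_notMem_attachPoints : x ∉ attachPoints G p C := by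
  rintro ⟨-, h, -, hhx⟩
  exact hp.not_isChain_of_perm_append (M := [h]) (List.cons_ne_nil _ _)
    (List.nodup_singleton _) (List.forall_mem_singleton.2 h.2)
    (List.perm_append_singleton _ _).symm (cons hhx p).isChain_adj_support

lemma getVert_succ_notMem_attachPoints {k : ℕ} (hk : k < p.length)
    (hs : p.getVert k ∈ attachPoints G p C) : p.getVert (k + 1) ∉ attachPoints G p C := by
  obtain ⟨T, D, hTD⟩ := p.exists_support_eq_append_cons_cons hk
  set s := p.getVert k
  set u := p.getVert (k + 1)
  intro hu
  obtain ⟨M, hM, hMn, hMp, hc⟩ := exists_detour_of_mem_attachPoints hs hu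
  have hL := p.isChain_adj_support
  rw [hTD, List.isChain_append_cons_cons] at hL
  refine hp.not_isChain_of_perm_append hM hMn hMp (l := T ++ s :: (M ++ u :: D)) ?_ ?_
  · classical
    rw [hTD, List.perm_iff_count]
    intro a
    simp only [List.count_append, List.count_cons]
    omega
  · exact List.isChain_split.2 ⟨hL.1, List.isChain_cons_split.2 ⟨hc, hL.2.2⟩⟩

lemma not_adj_start_getVert_succ {k : ℕ} (hk : k < p.length)
    (hs : p.getVert k ∈ attachPoints G p C) : ¬ G.Adj x (p.getVert (k + 1)) := by
  obtain ⟨T, D, hTD⟩ := p.exists_support_eq_append_cons_cons hk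
  set s := p.getVert k
  set u := p.getVert (k + 1)
  intro hxu
  obtain ⟨-, ⟨h, hh⟩, -, hhs⟩ := id hs
  rcases T with _ | ⟨a, R⟩
  · rw [← p.cons_tail_support, List.nil_append, List.cons.injEq] at hTD
    rw [← hTD.1] at hs
    exact hp.start_notMem_attachPoints hs
  obtain rfl : x = a := by
    rw [← p.cons_tail_support, List.cons_append, List.cons.injEq] at hTD
    exact hTD.1
  have hL := p.isChain_adj_support
  rw [hTD, List.isChain_append_cons_cons] at hL
  refine hp.not_isChain_of_perm_append (M := [h]) (List.cons_ne_nil _ _)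
    (List.nodup_singleton _) (List.forall_mem_singleton.2 hh)
    (l := h :: s :: (R.reverse ++ x :: u :: D)) ?_ ?_
  · classical
    rw [hTD, List.perm_iff_count]
    intro b
    simp only [List.count_append, List.count_cons, List.count_reverse, List.count_nil]
    omega
  · have hback : (s :: (R.reverse ++ [x])).IsChain G.Adj := by
      simpa using isChain_adj_reverse hL.1
    exact List.isChain_cons_cons.2 ⟨hhs,
      List.isChain_cons_split.2 ⟨hback, List.isChain_cons_cons.2 ⟨hxu, hL.2.2⟩⟩⟩

lemma not_adj_getVert_succ_getVert_succ {k l : ℕ} (hkl : k < l) (hl : l < p.length)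
    (hs : p.getVert k ∈ attachPoints G p C) (ht : p.getVert l ∈ attachPoints G p C) :
    ¬ G.Adj (p.getVert (k + 1)) (p.getVert (l + 1)) := by
  obtain rfl | hkl := (show l = k + 1 ∨ k + 2 ≤ l by omega)
  · exact absurd ht (hp.getVert_succ_notMem_attachPoints (by omega) hs)
  obtain ⟨T, R, D, hTD⟩ := p.exists_support_eq_append_cons_cons_append_cons_cons hkl hl
  set s := p.getVert k
  set u := p.getVert (k + 1)
  set t := p.getVert l
  set w := p.getVert (l + 1)
  intro huw
  obtain ⟨M, hM, hMn, hMp, hc⟩ := exists_detour_of_mem_attachPoints hs ht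
  have hL := p.isChain_adj_support
  rw [hTD, List.isChain_append_cons_cons, List.isChain_cons_append_cons_cons] at hL
  refine hp.not_isChain_of_perm_append hM hMn hMp
    (l := T ++ s :: (M ++ t :: (R.reverse ++ u :: w :: D))) ?_ ?_
  · classical
    rw [hTD, List.perm_iff_count]
    intro a
    simp only [List.count_append, List.count_cons, List.count_reverse]
    omega
  · have hback : (t :: (R.reverse ++ [u])).IsChain G.Adj := by
      simpa using isChain_adj_reverse hL.2.2.1
    exact List.isChain_split.2 ⟨hL.1, List.isChain_cons_split.2 ⟨hc,
      List.isChain_cons_split.2 ⟨hback, List.isChain_cons_cons.2 ⟨huw, hL.2.2.2.2⟩⟩⟩⟩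

lemma ncard_attachPoints : (attachPoints G p C).ncard = (p.attachIndices C).card := by
  have himage : attachPoints G p C = p.getVert '' (p.attachIndices C) := by
    ext s
    refine ⟨fun hs => ?_, ?_⟩
    · obtain ⟨k, rfl, hk⟩ := mem_support_iff_exists_getVert.1 hs.1
      have hk' : k ≠ p.length := by
        rintro rfl
        exact hp.end_notMem_attachPoints (p.getVert_length ▸ hs)
      exact ⟨k, mem_attachIndices.2 ⟨by omega, hs⟩, rfl⟩
    · rintro ⟨k, hk, rfl⟩
      exact (mem_attachIndices.1 hk).2
  rw [himage, (hp.1.getVert_injOn.mono fun k hk => (mem_attachIndices.1 hk).1.le).ncard_image,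
    Set.ncard_coe_finset]

lemma not_adj_of_mem_startAndSuccessors {a b : V} (ha : a ∈ p.startAndSuccessors C)
    (hb : b ∈ p.startAndSuccessors C) (hab : a ≠ b) : ¬ G.Adj a b := by
  simp only [startAndSuccessors, Finset.mem_insert, Finset.mem_image] at ha hb
  rcases ha with rfl | ⟨k, hk, rfl⟩ <;> rcases hb with rfl | ⟨l, hl, rfl⟩
  · exact absurd rfl hab
  · exact hp.not_adj_start_getVert_succ (mem_attachIndices.1 hl).1 (mem_attachIndices.1 hl).2
  · exact fun h => hp.not_adj_start_getVert_succ (mem_attachIndices.1 hk).1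
      (mem_attachIndices.1 hk).2 h.symm
  · rw [mem_attachIndices] at hk hl
    rcases lt_trichotomy k l with hkl | rfl | hlk
    · exact hp.not_adj_getVert_succ_getVert_succ hkl hl.1 hk.2 hl.2
    · exact absurd rfl hab
    · exact fun h => hp.not_adj_getVert_succ_getVert_succ hlk hk.1 hl.2 hk.2 h.symm

lemma not_adj_component_of_mem_startAndSuccessors {a : V} (ha : a ∈ p.startAndSuccessors C)
    (h : {v : V | v ∉ p.support})
    (hC : (G.induce {v : V | v ∉ p.support}).connectedComponentMk h = C) : ¬ G.Adj a h := by
  intro hah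
  have hS : a ∈ attachPoints G p C :=
    ⟨mem_support_of_mem_startAndSuccessors ha, h, hC, hah.symm⟩
  simp only [startAndSuccessors, Finset.mem_insert, Finset.mem_image] at ha
  rcases ha with rfl | ⟨k, hk, rfl⟩
  · exact hp.start_notMem_attachPoints hS
  · exact hp.getVert_succ_notMem_attachPoints (mem_attachIndices.1 hk).1
      (mem_attachIndices.1 hk).2 hS

end IsLongestPath

theorem indep_set_of_longest_path_general
    {V : Type} (G : SimpleGraph V) {x y : V}
    (p : G.Walk x y) (hp : IsLongestPath G p)
    (C : (G.induce {v : V | v ∉ p.support}).ConnectedComponent) :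
    ∃ A : Finset V,
      (∀ a ∈ A, ∀ b ∈ A, a ≠ b → ¬ G.Adj a b) ∧
      (∀ a ∈ A, a ∈ p.support) ∧
      (attachPoints G p C).ncard + 1 ≤ A.card ∧
      (∀ a ∈ A, ∀ h : {v : V | v ∉ p.support},
        (G.induce {v : V | v ∉ p.support}).connectedComponentMk h = C → ¬ G.Adj a ↑h) := by
  refine ⟨p.startAndSuccessors C, fun a ha b hb => hp.not_adj_of_mem_startAndSuccessors ha hb,
    fun a ha => Walk.mem_support_of_mem_startAndSuccessors ha, ?_,
    fun a ha => hp.not_adj_component_of_mem_startAndSuccessors ha⟩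
  rw [hp.ncard_attachPoints, Walk.card_startAndSuccessors hp.1]

/-- If `P` is a longest path in `G` and `H` is a component of `G - V(P)` with `k`
attachment points, then there is an independent set `A ⊆ V(P)` with `|A| ≥ k + 1`
and no edge between `A` and `H`. -/
theorem indep_set_of_longest_path
    {V : Type} [Fintype V] (G : SimpleGraph V) {x y : V}
    (p : G.Walk x y) (hp : IsLongestPath G p)
    (C : (G.induce {v : V | v ∉ p.support}).ConnectedComponent) :
    ∃ A : Finset V,
      (∀ a ∈ A, ∀ b ∈ A, a ≠ b → ¬ G.Adj a b) ∧
      (∀ a ∈ A, a ∈ p.support) ∧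
      (attachPoints G p C).ncard + 1 ≤ A.card ∧
      (∀ a ∈ A, ∀ h : {v : V | v ∉ p.support},
        (G.induce {v : V | v ∉ p.support}).connectedComponentMk h = C → ¬ G.Adj a ↑h) :=
  indep_set_of_longest_path_general G p hp C
end
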